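/- arXiv:2102.10226 — 7 statements merged into one kernel-verified Lean document; each statement's English description precedes it below -/
import Mathlib

section
/- Let n, M ≥ 1. Let Q_*(1),…,Q_*(M) be nonzero symmetric n×n real matrices, and for each m let U_m ∈ ℝ^{n×K_m} have orthonormal columns spanning the column space of Q_*(m); set Π_{U_m⊥} = I − U_m U_mᵀ. Define L₁ = {X ∈ ℝ^{M×n×n} : Π_{U_m⊥} X(m) Π_{U_m⊥} = 0 for all m} and L₂ = {Q_* ×₁ X : X ∈ ℝ^{M×M} skew-symmetric}, where (Q_* ×₁ X)(m) = Σ_{m'=1}^M X(m,m') Q_*(m'). Suppose that for every m ∈ {1,…,M}, the M−1 matrices {Π_{U_m⊥} Q_*(m') Π_{U_m⊥} : m' ≠ m} are linearly independent in ℝ^{n×n}. Then L₁ ∩ L₂ = {0}; equivalently, the only skew-symmetric X ∈ ℝ^{M×M} with Q_* ×₁ X ∈ L₁ is X = 0. -/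
open Matrix BigOperators

/-- Frobenius norm of a real matrix. -/
noncomputable def frobNorm {a b : ℕ} (X : Matrix (Fin a) (Fin b) ℝ) : ℝ :=
  Real.sqrt (∑ i, ∑ j, (X i j) ^ 2)

/-- Spectral (operator) norm of a real matrix. -/
noncomputable def specNorm {a b : ℕ} (X : Matrix (Fin a) (Fin b) ℝ) : ℝ :=
  ‖LinearMap.toContinuousLinearMap (Matrix.toEuclideanLin X)‖

/-- Mode-1 product of a tensor `X ∈ ℝ^{J×n×n}` with `B ∈ ℝ^{J'×J}`:
`(X ×₁ B)(j') = Σ_j B(j',j) X(j)`. -/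
noncomputable def mode1 {J J' n : ℕ} (X : Fin J → Matrix (Fin n) (Fin n) ℝ)
    (B : Matrix (Fin J') (Fin J) ℝ) : Fin J' → Matrix (Fin n) (Fin n) ℝ :=
  fun j' => ∑ j, B j' j • X j

/-- Mode-(2,3) product: `(X ×_{2,3} Y)(i,j) = Tr(X(i) Y(j)ᵀ)`. -/
noncomputable def prod23 {J J' n : ℕ} (X : Fin J → Matrix (Fin n) (Fin n) ℝ)
    (Y : Fin J' → Matrix (Fin n) (Fin n) ℝ) : Matrix (Fin J) (Fin J') ℝ :=
  Matrix.of fun i j => ((X i) * (Y j)ᵀ).trace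

/-- Frobenius norm of a tensor. -/
noncomputable def tFrobNorm {J n : ℕ} (X : Fin J → Matrix (Fin n) (Fin n) ℝ) : ℝ :=
  Real.sqrt (∑ j, ∑ a, ∑ b, (X j a b) ^ 2)

/-- Tensor operator norm:
`‖X‖ = sup{Σ_{j,a,b} X(j,a,b) u_j v_a w_b : ‖u‖=‖v‖=‖w‖=1}`. -/
noncomputable def tOpNorm {J n : ℕ} (X : Fin J → Matrix (Fin n) (Fin n) ℝ) : ℝ :=
  sSup { c | ∃ (u : EuclideanSpace ℝ (Fin J)) (v w : EuclideanSpace ℝ (Fin n)),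
    ‖u‖ = 1 ∧ ‖v‖ = 1 ∧ ‖w‖ = 1 ∧ c = ∑ j, ∑ a, ∑ b, X j a b * u j * v a * w b }

/-- Slice-wise projection `X(j) ↦ X(j) − P X(j) P` applied to every slice of a tensor. -/
noncomputable def piT {J n : ℕ} (P : Matrix (Fin n) (Fin n) ℝ)
    (X : Fin J → Matrix (Fin n) (Fin n) ℝ) : Fin J → Matrix (Fin n) (Fin n) ℝ :=
  fun j => X j - P * X j * P

/-!
Since the columns of `Q(m)` lie in the range of `U_m`, the projection `Π_{U_m⊥}` kills `Q(m)`, so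
compressing the `m`-th slice of `Q ×₁ V` leaves `Σ_{m' ≠ m} V(m,m') Π Q(m') Π`. Linear independence
then forces the off-diagonal entries of `V` to vanish, and skew-symmetry kills the diagonal.
-/

namespace Matrix

variable {R m n k : Type*} [CommRing R] [Fintype m] [Fintype k] [DecidableEq m] [DecidableEq k]

lemma one_sub_mul_transpose_mul_self {U : Matrix m k R} (hU : Uᵀ * U = 1) :
    (1 - U * Uᵀ) * U = 0 := by
  rw [Matrix.sub_mul, Matrix.one_mul, Matrix.mul_assoc, hU, Matrix.mul_one, sub_self]

lemma one_sub_mul_transpose_mul_eq_zero_of_span_col_le {U : Matrix m k R} {Q : Matrix m n R}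
    (hU : Uᵀ * U = 1)
    (hQU : Submodule.span R (Set.range Q.col) ≤ Submodule.span R (Set.range U.col)) :
    (1 - U * Uᵀ) * Q = 0 := by
  ext i j
  obtain ⟨c, hc⟩ : Q.col j ∈ LinearMap.range U.mulVecLin := by
    rw [range_mulVecLin]
    exact hQU (Submodule.subset_span ⟨j, rfl⟩)
  have h : (1 - U * Uᵀ) *ᵥ Q.col j = 0 := by
    rw [← hc, mulVecLin_apply, mulVec_mulVec, one_sub_mul_transpose_mul_self hU, zero_mulVec]
  simpa [mulVec, dotProduct, mul_apply] using congrFun h i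

lemma IsDiag.eq_zero_of_transpose_eq_neg {S : Type*} [Ring S] [NoZeroDivisors S] [CharZero S]
    {V : Matrix n n S} (hd : V.IsDiag) (hV : Vᵀ = -V) :
    V = 0 := by
  ext i j
  rcases eq_or_ne i j with rfl | hij
  · have h := congrFun (congrFun hV i) i
    simp only [transpose_apply, neg_apply] at h
    simpa using self_eq_neg.mp h
  · exact hd hij

end Matrix

lemma eq_zero_of_sum_smul_eq_zero_of_linearIndependent_ne {R E ι : Type*} [Ring R]
    [AddCommGroup E] [Module R E] [Fintype ι] [DecidableEq ι] {f : ι → E} {i : ι} (hfi : f i = 0)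
    (hf : LinearIndependent R fun j : {j // j ≠ i} => f j) {c : ι → R}
    (hc : ∑ j, c j • f j = 0) {j : ι} (hj : j ≠ i) : c j = 0 := by
  rw [Fintype.sum_eq_add_sum_subtype_ne _ i, hfi, smul_zero, zero_add] at hc
  exact Fintype.linearIndependent_iff.mp hf (fun j => c j) hc ⟨j, hj⟩

lemma mul_mode1_mul {J J' n : ℕ} (P : Matrix (Fin n) (Fin n) ℝ)
    (Q : Fin J → Matrix (Fin n) (Fin n) ℝ) (V : Matrix (Fin J') (Fin J) ℝ) (j' : Fin J') :
    P * mode1 Q V j' * P = ∑ j, V j' j • (P * Q j * P) := by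
  simp only [mode1, Matrix.mul_sum, Matrix.sum_mul, Matrix.mul_smul, Matrix.smul_mul]

@[simp]
lemma mode1_zero_right {J J' n : ℕ} (Q : Fin J → Matrix (Fin n) (Fin n) ℝ) :
    mode1 Q (0 : Matrix (Fin J') (Fin J) ℝ) = 0 := by
  funext j'
  simp [mode1]

theorem stmt0_general {n M : ℕ}
    (K : Fin M → ℕ) (Q : Fin M → Matrix (Fin n) (Fin n) ℝ)
    (U : ∀ m : Fin M, Matrix (Fin n) (Fin (K m)) ℝ)
    (hUo : ∀ m, (U m)ᵀ * U m = 1)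
    (hUspan : ∀ m, Submodule.span ℝ (Set.range fun k => (U m)ᵀ k) =
      Submodule.span ℝ (Set.range fun j => (Q m)ᵀ j))
    (hindep : ∀ m : Fin M, LinearIndependent ℝ
      (fun m' : {m' : Fin M // m' ≠ m} =>
        (1 - U m * (U m)ᵀ) * Q m' * (1 - U m * (U m)ᵀ))) :
    {X : Fin M → Matrix (Fin n) (Fin n) ℝ |
        ∀ m, (1 - U m * (U m)ᵀ) * X m * (1 - U m * (U m)ᵀ) = 0} ∩
      {X | ∃ V : Matrix (Fin M) (Fin M) ℝ, Vᵀ = -V ∧ X = mode1 Q V} = {0} := by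
  have hQ : ∀ m, (1 - U m * (U m)ᵀ) * Q m * (1 - U m * (U m)ᵀ) = 0 := fun m => by
    rw [Matrix.one_sub_mul_transpose_mul_eq_zero_of_span_col_le (hUo m) (hUspan m).ge,
      Matrix.zero_mul]
  ext X
  simp only [Set.mem_inter_iff, Set.mem_ofPred_eq, Set.mem_singleton_iff]
  constructor
  · rintro ⟨hL₁, V, hskew, rfl⟩
    have hdiag : V.IsDiag := fun m m' hne =>
      eq_zero_of_sum_smul_eq_zero_of_linearIndependent_ne
        (f := fun m' => (1 - U m * (U m)ᵀ) * Q m' * (1 - U m * (U m)ᵀ)) (hQ m) (hindep m)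
        ((mul_mode1_mul _ Q V m).symm.trans (hL₁ m)) hne.symm
    rw [hdiag.eq_zero_of_transpose_eq_neg hskew, mode1_zero_right]
  · rintro rfl
    exact ⟨fun m => by simp, 0, by simp, (mode1_zero_right Q).symm⟩

/-- Sufficient condition (A1(a)) for the trivial intersection of the
tangent spaces `L₁` and `L₂`. -/
theorem stmt0 {n M : ℕ} (hn : 1 ≤ n) (hM : 1 ≤ M)
    (K : Fin M → ℕ) (Q : Fin M → Matrix (Fin n) (Fin n) ℝ)
    (hQsymm : ∀ m, (Q m)ᵀ = Q m) (hQne : ∀ m, Q m ≠ 0)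
    (U : ∀ m : Fin M, Matrix (Fin n) (Fin (K m)) ℝ)
    (hUo : ∀ m, (U m)ᵀ * U m = 1)
    (hUspan : ∀ m, Submodule.span ℝ (Set.range fun k => (U m)ᵀ k) =
      Submodule.span ℝ (Set.range fun j => (Q m)ᵀ j))
    (hindep : ∀ m : Fin M, LinearIndependent ℝ
      (fun m' : {m' : Fin M // m' ≠ m} =>
        (1 - U m * (U m)ᵀ) * Q m' * (1 - U m * (U m)ᵀ))) :
    {X : Fin M → Matrix (Fin n) (Fin n) ℝ |
        ∀ m, (1 - U m * (U m)ᵀ) * X m * (1 - U m * (U m)ᵀ) = 0} ∩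
      {X | ∃ V : Matrix (Fin M) (Fin M) ℝ, Vᵀ = -V ∧ X = mode1 Q V} = {0} :=
  stmt0_general K Q U hUo hUspan hindep
end

section
/- Let W_*, Ŵ ∈ ℝ^{L×M} each have orthonormal columns, let Q_* ∈ ℝ^{M×n×n} have slices of rank at most K_m, let P_* = Q_* ×₁ W_* (slices P_*(l) = Σ_m W_*(l,m) Q_*(m)), let A ∈ ℝ^{L×n×n} be arbitrary and Δ = A − P_*. Fix m ∈ {1,…,M}, set D = Σ_l Ŵ(l,m) A(l) ∈ ℝ^{n×n}, and let Q̂ be any matrix of rank at most K_m satisfying ‖D − Q̂‖ ≤ ‖D − Z‖ (spectral norm) for every Z of rank at most K_m. Then ‖Q̂ − Q_*(m)‖ ≤ 2‖Q_*‖·‖Ŵ − W_*‖_F + 2‖Δ‖, where ‖Q_*‖ and ‖Δ‖ denote tensor operator norms. -/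
open Matrix BigOperators

/-!
With `w = Ŵ(·,m)` a unit vector (`ŴᵀŴ = 1`), `Q_*(m) = Σ_j (wᵀŴ)_j Q_*(j)`, so
`D - Q_*(m) = Σ_l w_l Δ(l) - Σ_j (wᵀ(Ŵ - W_*))_j Q_*(j)`.
Contracting a tensor `X` along its first mode with a vector `c` gives a matrix of spectral norm
at most `‖c‖ ‖X‖`, because `⟪v, (Σ_j c_j X(j)) w⟫` is the trilinear form defining `‖X‖`;
and `‖wᵀ(Ŵ - W_*)‖ ≤ ‖Ŵ - W_*‖_F` by Cauchy–Schwarz. Finally `Q_*(m)` is a competitor in the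
rank-`K_m` problem, so `‖Q̂ - Q_*(m)‖ ≤ ‖D - Q̂‖ + ‖D - Q_*(m)‖ ≤ 2 ‖D - Q_*(m)‖`.
-/

open scoped RealInnerProductSpace

section TensorForm

variable {J n : ℕ} (X : Fin J → Matrix (Fin n) (Fin n) ℝ)

def tensorForm (u : EuclideanSpace ℝ (Fin J)) (v w : EuclideanSpace ℝ (Fin n)) : ℝ :=
  ∑ j, ∑ a, ∑ b, X j a b * u j * v a * w b

def unitTensorForms : Set ℝ :=
  { c | ∃ (u : EuclideanSpace ℝ (Fin J)) (v w : EuclideanSpace ℝ (Fin n)),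
    ‖u‖ = 1 ∧ ‖v‖ = 1 ∧ ‖w‖ = 1 ∧ c = tensorForm X u v w }

theorem tOpNorm_eq_sSup : tOpNorm X = sSup (unitTensorForms X) := rfl

theorem tensorForm_smul_smul_smul (u : EuclideanSpace ℝ (Fin J)) (v w : EuclideanSpace ℝ (Fin n))
    (a b c : ℝ) :
    tensorForm X (a • u) (b • v) (c • w) = a * b * c * tensorForm X u v w := by
  simp only [tensorForm, Finset.mul_sum, PiLp.smul_apply, smul_eq_mul]
  refine Finset.sum_congr rfl fun _ _ => Finset.sum_congr rfl fun _ _ =>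
    Finset.sum_congr rfl fun _ _ => by ring

theorem bddAbove_unitTensorForms : BddAbove (unitTensorForms X) := by
  refine ⟨∑ j, ∑ a, ∑ b, |X j a b|, ?_⟩
  rintro _ ⟨u, v, w, hu, hv, hw, rfl⟩
  have habs_le_one {k : ℕ} (x : EuclideanSpace ℝ (Fin k)) (hx : ‖x‖ = 1) (i : Fin k) : |x i| ≤ 1 :=
    hx ▸ PiLp.norm_apply_le x i
  unfold tensorForm
  gcongr with j _ a _ b _
  calc X j a b * u j * v a * w b ≤ |X j a b| * |u j| * |v a| * |w b| := by
        simpa only [abs_mul] using le_abs_self (X j a b * u j * v a * w b)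
    _ ≤ |X j a b| * 1 * 1 * 1 := by gcongr <;> apply habs_le_one <;> assumption
    _ = |X j a b| := by ring

theorem tOpNorm_nonneg : 0 ≤ tOpNorm X := by
  rw [tOpNorm_eq_sSup]
  rcases (unitTensorForms X).eq_empty_or_nonempty with h | ⟨_, u, v, w, hu, hv, hw, rfl⟩
  · rw [h, Real.sSup_empty]
  have hneg : -tensorForm X u v w ∈ unitTensorForms X :=
    ⟨-u, v, w, by rwa [norm_neg], hv, hw, by
      simpa using (tensorForm_smul_smul_smul X u v w (-1) 1 1).symm⟩
  rcases le_total 0 (tensorForm X u v w) with h | h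
  · exact h.trans (le_csSup (bddAbove_unitTensorForms X) ⟨u, v, w, hu, hv, hw, rfl⟩)
  · exact (neg_nonneg.2 h).trans (le_csSup (bddAbove_unitTensorForms X) hneg)

theorem tensorForm_le (u : EuclideanSpace ℝ (Fin J)) (v w : EuclideanSpace ℝ (Fin n)) :
    tensorForm X u v w ≤ ‖u‖ * ‖v‖ * ‖w‖ * tOpNorm X := by
  by_cases h0 : u = 0 ∨ v = 0 ∨ w = 0
  · rcases h0 with rfl | rfl | rfl <;> simp [tensorForm]
  simp only [not_or] at h0
  obtain ⟨hu, hv, hw⟩ := h0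
  have hunit : ‖u‖⁻¹ * ‖v‖⁻¹ * ‖w‖⁻¹ * tensorForm X u v w ≤ tOpNorm X := by
    rw [← tensorForm_smul_smul_smul]
    exact le_csSup (bddAbove_unitTensorForms X)
      ⟨_, _, _, by simp [norm_smul, hu], by simp [norm_smul, hv], by simp [norm_smul, hw], rfl⟩
  have hpos : 0 < ‖u‖ * ‖v‖ * ‖w‖ := by positivity
  calc tensorForm X u v w
      = ‖u‖ * ‖v‖ * ‖w‖ * (‖u‖⁻¹ * ‖v‖⁻¹ * ‖w‖⁻¹ * tensorForm X u v w) := by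
        field_simp
    _ ≤ ‖u‖ * ‖v‖ * ‖w‖ * tOpNorm X := mul_le_mul_of_nonneg_left hunit hpos.le

theorem inner_toEuclideanLin_sum_smul (u : EuclideanSpace ℝ (Fin J))
    (v w : EuclideanSpace ℝ (Fin n)) :
    ⟪v, Matrix.toEuclideanLin (∑ j, u j • X j) w⟫ = tensorForm X u v w := by
  simp only [EuclideanSpace.inner_eq_star_dotProduct, Matrix.toLpLin_apply, dotProduct,
    mulVec, Matrix.sum_apply, Matrix.smul_apply, smul_eq_mul, Finset.sum_mul, star_trivial,
    tensorForm]
  calc _ = ∑ a, ∑ j, ∑ b, u j * X j a b * w b * v a :=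
        Finset.sum_congr rfl fun _ _ => Finset.sum_comm
    _ = ∑ j, ∑ a, ∑ b, u j * X j a b * w b * v a := Finset.sum_comm
    _ = _ := Finset.sum_congr rfl fun _ _ => Finset.sum_congr rfl fun _ _ =>
        Finset.sum_congr rfl fun _ _ => by ring

theorem specNorm_sum_smul_le (c : Fin J → ℝ) :
    specNorm (∑ j, c j • X j) ≤ ‖WithLp.toLp 2 c‖ * tOpNorm X := by
  set u : EuclideanSpace ℝ (Fin J) := WithLp.toLp 2 c
  set f := LinearMap.toContinuousLinearMap (Matrix.toEuclideanLin (∑ j, u j • X j))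
  refine f.opNorm_le_bound (by have := tOpNorm_nonneg X; positivity) fun w => ?_
  rcases (norm_nonneg (f w)).eq_or_lt with h0 | hpos
  · rw [← h0]; have := tOpNorm_nonneg X; positivity
  have hsq : ‖f w‖ * ‖f w‖ ≤ ‖f w‖ * (‖u‖ * tOpNorm X * ‖w‖) := by
    calc ‖f w‖ * ‖f w‖ = tensorForm X u (f w) w := by
          rw [← real_inner_self_eq_norm_mul_norm, ← inner_toEuclideanLin_sum_smul]; rfl
      _ ≤ ‖u‖ * ‖f w‖ * ‖w‖ * tOpNorm X := tensorForm_le X u (f w) w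
      _ = ‖f w‖ * (‖u‖ * tOpNorm X * ‖w‖) := by ring
  exact le_of_mul_le_mul_left hsq hpos

end TensorForm

section SpecNorm

variable {a b : ℕ}

theorem specNorm_add_le (X Y : Matrix (Fin a) (Fin b) ℝ) :
    specNorm (X + Y) ≤ specNorm X + specNorm Y := by
  simpa only [specNorm, map_add] using norm_add_le _ _

theorem specNorm_sub_le (X Y : Matrix (Fin a) (Fin b) ℝ) :
    specNorm (X - Y) ≤ specNorm X + specNorm Y := by
  simpa only [specNorm, map_sub] using norm_sub_le _ _

theorem specNorm_sub_le_two_mul_of_le {D X Y : Matrix (Fin a) (Fin b) ℝ}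
    (h : specNorm (D - X) ≤ specNorm (D - Y)) : specNorm (X - Y) ≤ 2 * specNorm (D - Y) := by
  have := specNorm_sub_le (D - Y) (D - X)
  rw [sub_sub_sub_cancel_left] at this
  linarith

end SpecNorm

section OrthonormalColumns

variable {L M : ℕ}

theorem vecMul_eq_one_apply_of_transpose_mul_self {B : Matrix (Fin L) (Fin M) ℝ}
    (hB : Bᵀ * B = 1) (m : Fin M) : (fun l => B l m) ᵥ* B = (1 : Matrix (Fin M) (Fin M) ℝ) m := by
  rw [← hB]
  rfl

theorem norm_toLp_col_eq_one {B : Matrix (Fin L) (Fin M) ℝ} (hB : Bᵀ * B = 1) (m : Fin M) :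
    ‖(WithLp.toLp 2 fun l => B l m : EuclideanSpace ℝ (Fin L))‖ = 1 := by
  have h := congrFun (vecMul_eq_one_apply_of_transpose_mul_self hB m) m
  simp only [vecMul, dotProduct, one_apply_eq] at h
  simp [EuclideanSpace.norm_eq, sq, h]

theorem norm_toLp_vecMul_le (w : Fin L → ℝ) (B : Matrix (Fin L) (Fin M) ℝ) :
    ‖(WithLp.toLp 2 (w ᵥ* B) : EuclideanSpace ℝ (Fin M))‖
      ≤ ‖(WithLp.toLp 2 w : EuclideanSpace ℝ (Fin L))‖ * frobNorm B := by
  rw [EuclideanSpace.norm_eq, EuclideanSpace.norm_eq, frobNorm, ← Real.sqrt_mul (by positivity),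
    Finset.sum_comm (f := fun i j => B i j ^ 2), Finset.mul_sum]
  refine Real.sqrt_le_sqrt (Finset.sum_le_sum fun j _ => ?_)
  simpa [vecMul, dotProduct] using Finset.sum_mul_sq_le_sq_mul_sq Finset.univ w (fun l => B l j)

end OrthonormalColumns

theorem sum_smul_mode1 {J J' n : ℕ} (X : Fin J → Matrix (Fin n) (Fin n) ℝ)
    (B : Matrix (Fin J') (Fin J) ℝ) (w : Fin J' → ℝ) :
    ∑ l, w l • mode1 X B l = ∑ j, (w ᵥ* B) j • X j := by
  simp only [mode1, Finset.smul_sum, smul_smul, vecMul, dotProduct, Finset.sum_smul]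
  exact Finset.sum_comm

theorem stmt6_general {L M n : ℕ} (K : Fin M → ℕ)
    (Wstar What : Matrix (Fin L) (Fin M) ℝ)
    (hWhat : Whatᵀ * What = 1)
    (Q : Fin M → Matrix (Fin n) (Fin n) ℝ) (hrank : ∀ m, (Q m).rank ≤ K m)
    (A : Fin L → Matrix (Fin n) (Fin n) ℝ)
    (m : Fin M)
    (Qhat : Matrix (Fin n) (Fin n) ℝ)
    (hopt : ∀ Z : Matrix (Fin n) (Fin n) ℝ, Z.rank ≤ K m →
      specNorm ((∑ l, What l m • A l) - Qhat) ≤ specNorm ((∑ l, What l m • A l) - Z)) :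
    specNorm (Qhat - Q m) ≤
      2 * tOpNorm Q * frobNorm (What - Wstar) +
        2 * tOpNorm (fun l => A l - mode1 Q Wstar l) := by
  set Δ := fun l => A l - mode1 Q Wstar l
  set w := fun l => What l m
  have hQm : Q m = ∑ j, (w ᵥ* What) j • Q j := by
    simp [w, vecMul_eq_one_apply_of_transpose_mul_self hWhat m, one_apply]
  have hsplit : (∑ l, w l • A l) - Q m = ∑ l, w l • Δ l - ∑ j, (w ᵥ* (What - Wstar)) j • Q j := by
    simp only [Δ, hQm, smul_sub, Finset.sum_sub_distrib, sum_smul_mode1, vecMul_sub, Pi.sub_apply, sub_smul]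
    abel
  have hw : ‖(WithLp.toLp 2 w : EuclideanSpace ℝ (Fin L))‖ = 1 := norm_toLp_col_eq_one hWhat m
  have hD : specNorm ((∑ l, w l • A l) - Q m) ≤ tOpNorm Δ + frobNorm (What - Wstar) * tOpNorm Q := by
    rw [hsplit]
    refine (specNorm_sub_le _ _).trans (add_le_add ?_ ?_)
    · simpa [hw] using specNorm_sum_smul_le Δ w
    · calc specNorm (∑ j, (w ᵥ* (What - Wstar)) j • Q j)
          ≤ ‖(WithLp.toLp 2 (w ᵥ* (What - Wstar)) : EuclideanSpace ℝ (Fin M))‖ * tOpNorm Q :=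
            specNorm_sum_smul_le Q _
        _ ≤ frobNorm (What - Wstar) * tOpNorm Q := by
            gcongr
            · exact tOpNorm_nonneg Q
            · simpa [hw] using norm_toLp_vecMul_le w (What - Wstar)
  calc specNorm (Qhat - Q m) ≤ 2 * specNorm ((∑ l, w l • A l) - Q m) :=
        specNorm_sub_le_two_mul_of_le (hopt (Q m) (hrank m))
    _ ≤ 2 * tOpNorm Q * frobNorm (What - Wstar) + 2 * tOpNorm Δ := by linarith

/-- Spectral-norm error of the best rank-`K_m` approximation of the
weighted layer average. -/
theorem stmt6 {L M n : ℕ} (K : Fin M → ℕ)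
    (Wstar What : Matrix (Fin L) (Fin M) ℝ)
    (hWstar : Wstarᵀ * Wstar = 1) (hWhat : Whatᵀ * What = 1)
    (Q : Fin M → Matrix (Fin n) (Fin n) ℝ) (hrank : ∀ m, (Q m).rank ≤ K m)
    (A : Fin L → Matrix (Fin n) (Fin n) ℝ)
    (m : Fin M)
    (Qhat : Matrix (Fin n) (Fin n) ℝ) (hQhatRank : Qhat.rank ≤ K m)
    (hopt : ∀ Z : Matrix (Fin n) (Fin n) ℝ, Z.rank ≤ K m →
      specNorm ((∑ l, What l m • A l) - Qhat) ≤ specNorm ((∑ l, What l m • A l) - Z)) :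
    specNorm (Qhat - Q m) ≤
      2 * tOpNorm Q * frobNorm (What - Wstar) +
        2 * tOpNorm (fun l => A l - mode1 Q Wstar l) :=
  stmt6_general K Wstar What hWhat Q hrank A m Qhat hopt
end

section
/- Let n ≥ 1 and let Q₁, Q₂ be nonzero symmetric n×n real matrices. For i = 1,2 let U_i have orthonormal columns spanning the column space of Q_i and set Π_i = I − U_iU_iᵀ. In the space ℝ^{2×n×n} of pairs of n×n matrices with the Frobenius inner product, let L₁ = {(X₁,X₂) : Π_1 X₁ Π_1 = 0 and Π_2 X₂ Π_2 = 0} and L₂ = span{(Q₂, −Q₁)} (which equals {Q ×₁ X : X ∈ ℝ^{2×2} skew-symmetric} for Q = (Q₁,Q₂)), and let κ_H = sup_{X≠0} ‖P_{L₂}P_{L₁}X‖_F/‖X‖_F with P_{L₁}, P_{L₂} the orthogonal projections. Then κ_H = √( ( ‖Q₁ − Π₂ Q₁ Π₂‖_F² + ‖Q₂ − Π₁ Q₂ Π₁‖_F² ) / ( ‖Q₁‖_F² + ‖Q₂‖_F² ) ). -/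
open Matrix BigOperators

/-- Flattening a tensor into a Euclidean vector, as a linear map. -/
noncomputable def embT (M n : ℕ) :
    (Fin M → Matrix (Fin n) (Fin n) ℝ) →ₗ[ℝ] EuclideanSpace ℝ (Fin M × Fin n × Fin n) :=
  (WithLp.linearEquiv 2 ℝ ((Fin M × Fin n × Fin n) → ℝ)).symm.toLinearMap ∘ₗ
    { toFun := fun X p => X p.1 p.2.1 p.2.2
      map_add' := fun _ _ => rfl
      map_smul' := fun _ _ => rfl }

/-- The linear map sending a flattened tensor `X` to the tensor with slices `Π m * X(m) * Π m`. -/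
noncomputable def sandwichMap {M n : ℕ} (Pi : Fin M → Matrix (Fin n) (Fin n) ℝ) :
    EuclideanSpace ℝ (Fin M × Fin n × Fin n) →ₗ[ℝ] (Fin M → Matrix (Fin n) (Fin n) ℝ) where
  toFun v m := Pi m * (Matrix.of fun a b => v (m, a, b)) * Pi m
  map_add' x y := by
    funext m
    show Pi m * (Matrix.of fun a b => x (m, a, b) + y (m, a, b)) * Pi m = _
    rw [show (Matrix.of fun a b => x (m, a, b) + y (m, a, b))
        = (Matrix.of fun a b => x (m, a, b)) + (Matrix.of fun a b => y (m, a, b)) from rfl,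
      Matrix.mul_add, Matrix.add_mul]
    rfl
  map_smul' c x := by
    funext m
    show Pi m * (Matrix.of fun a b => c * x (m, a, b)) * Pi m = _
    rw [show (Matrix.of fun a b => c * x (m, a, b))
        = c • (Matrix.of fun a b => x (m, a, b)) from rfl,
      Matrix.mul_smul, Matrix.smul_mul]
    rfl

/-- The subspace `L₁` (flattened): tensors with `Π m * X(m) * Π m = 0` for all `m`. -/
noncomputable def L1sub {M n : ℕ} (Pi : Fin M → Matrix (Fin n) (Fin n) ℝ) :
    Submodule ℝ (EuclideanSpace ℝ (Fin M × Fin n × Fin n)) :=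
  LinearMap.ker (sandwichMap Pi)

/-- `κ_H`: the operator norm of `P_{L₂} P_{L₁}` (as a supremum of Rayleigh quotients). -/
noncomputable def kappaH {M n : ℕ}
    (L1 L2 : Submodule ℝ (EuclideanSpace ℝ (Fin M × Fin n × Fin n))) : ℝ :=
  sSup {c | ∃ X : EuclideanSpace ℝ (Fin M × Fin n × Fin n), X ≠ 0 ∧
    c = ‖(Submodule.orthogonalProjectionOnto L2
        ((Submodule.orthogonalProjectionOnto L1 X : EuclideanSpace ℝ (Fin M × Fin n × Fin n))) :
      EuclideanSpace ℝ (Fin M × Fin n × Fin n))‖ / ‖X‖}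

/-! `L₂` is the line spanned by `v = (Q₂, -Q₁)`, so
`P_{L₂} P_{L₁} X = ⟪v, P_{L₁} X⟫ v / ‖v‖² = ⟪P_{L₁} v, X⟫ v / ‖v‖²`, and by Cauchy–Schwarz
`κ_H = ‖P_{L₁} v‖ / ‖v‖`, attained at `X = P_{L₁} v`. Since each `Π_i` is an orthogonal projection,
the slice-wise sandwich `X ↦ (Π_i X_i Π_i)_i` is a symmetric idempotent with kernel `L₁`, hence
`P_{L₁} v = (Q₂ - Π₁ Q₂ Π₁, -(Q₁ - Π₂ Q₁ Π₂))`. -/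

section Projection

variable {E : Type*} [NormedAddCommGroup E] [InnerProductSpace ℝ E]

theorem norm_starProjection_span_singleton (v w : E) :
    ‖(ℝ ∙ v).starProjection w‖ = |inner ℝ v w| / ‖v‖ := by
  rcases eq_or_ne v 0 with rfl | hv
  · simp
  have hv' : 0 < ‖v‖ := norm_pos_iff.mpr hv
  rw [Submodule.starProjection_singleton, norm_smul, Real.norm_eq_abs, RCLike.ofReal_real_eq_id,
    id, abs_div, abs_of_pos (by positivity : 0 < ‖v‖ ^ 2)]
  field_simp

theorem sSup_norm_starProjection_span_singleton_comp (K : Submodule ℝ E)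
    [K.HasOrthogonalProjection] (v : E) :
    sSup {c | ∃ x : E, x ≠ 0 ∧ c = ‖(ℝ ∙ v).starProjection (K.starProjection x)‖ / ‖x‖} =
      ‖K.starProjection v‖ / ‖v‖ := by
  set w := K.starProjection v
  have hval (x : E) : ‖(ℝ ∙ v).starProjection (K.starProjection x)‖ / ‖x‖ =
      |inner ℝ w x| / (‖v‖ * ‖x‖) := by
    rw [norm_starProjection_span_singleton, ← Submodule.inner_starProjection_left_eq_right,
      div_div]
  rcases eq_or_ne w 0 with hw | hw
  · rw [hw, norm_zero, zero_div]
    refine le_antisymm (Real.sSup_nonpos ?_) (Real.sSup_nonneg ?_) <;>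
      rintro _ ⟨x, -, rfl⟩ <;> simp [hval, hw]
  refine IsGreatest.csSup_eq ⟨⟨w, hw, ?_⟩, ?_⟩
  · have : 0 < ‖w‖ := norm_pos_iff.mpr hw
    rw [hval, real_inner_self_eq_norm_sq, abs_of_nonneg (by positivity)]
    field_simp
  · rintro _ ⟨x, -, rfl⟩
    rw [hval]
    calc |inner ℝ w x| / (‖v‖ * ‖x‖) ≤ ‖w‖ * ‖x‖ / (‖v‖ * ‖x‖) := by
          gcongr; exact abs_real_inner_le_norm w x
      _ = ‖w‖ / ‖v‖ * (‖x‖ / ‖x‖) := mul_div_mul_comm _ _ _ _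
      _ ≤ ‖w‖ / ‖v‖ := mul_le_of_le_one_right (by positivity) (div_self_le_one _)

theorem starProjection_ker_apply {T : E →ₗ[ℝ] E} (hT : T.IsSymmetricProjection)
    [(LinearMap.ker T).HasOrthogonalProjection] (x : E) :
    (LinearMap.ker T).starProjection x = x - T x := by
  apply Submodule.eq_starProjection_of_mem_of_inner_eq_zero
  · rw [LinearMap.mem_ker, map_sub, ← Module.End.mul_apply, hT.isIdempotentElem.eq, sub_self]
  · intro y hy
    rw [sub_sub_cancel, hT.isSymmetric, LinearMap.mem_ker.mp hy, inner_zero_right]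

end Projection

section Matrix

variable {m k R : Type*} [Fintype m] [CommRing R]

theorem Matrix.isIdempotentElem_one_sub_mul_transpose [Fintype k] [DecidableEq m] [DecidableEq k]
    {U : Matrix m k R} (hU : Uᵀ * U = 1) : IsIdempotentElem (1 - U * Uᵀ) := by
  refine IsIdempotentElem.one_sub ?_
  rw [IsIdempotentElem, Matrix.mul_assoc, ← Matrix.mul_assoc Uᵀ, hU, Matrix.one_mul]

theorem Matrix.trace_sandwich_mul_transpose {P : Matrix m m R} (hP : Pᵀ = P)
    (X Y : Matrix m m R) : (P * X * P * Yᵀ).trace = (X * (P * Y * P)ᵀ).trace := by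
  rw [Matrix.transpose_mul, Matrix.transpose_mul, hP,
    show P * X * P * Yᵀ = P * (X * P * Yᵀ) by simp only [Matrix.mul_assoc],
    Matrix.trace_mul_comm]
  simp only [Matrix.mul_assoc]

end Matrix

theorem frobNorm_sq {a b : ℕ} (X : Matrix (Fin a) (Fin b) ℝ) :
    frobNorm X ^ 2 = ∑ i, ∑ j, X i j ^ 2 :=
  Real.sq_sqrt (by positivity)

theorem frobNorm_neg {a b : ℕ} (X : Matrix (Fin a) (Fin b) ℝ) : frobNorm (-X) = frobNorm X := by
  simp [frobNorm]

theorem neg_sub_mul_neg_mul {R : Type*} [Ring R] (x p : R) :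
    -x - p * -x * p = -(x - p * x * p) := by
  rw [mul_neg, neg_mul, neg_sub_neg, neg_sub]

section Flattening

variable {M n : ℕ}

theorem embT_apply (X : Fin M → Matrix (Fin n) (Fin n) ℝ) (p : Fin M × Fin n × Fin n) :
    embT M n X p = X p.1 p.2.1 p.2.2 := rfl

theorem embT_injective : Function.Injective (embT M n) := by
  intro X Y h
  funext m
  ext a b
  exact congrArg (fun x => x (m, a, b)) h

theorem embT_surjective : Function.Surjective (embT M n) :=
  fun x => ⟨fun m => .of fun a b => x (m, a, b), rfl⟩

theorem inner_embT (X Y : Fin M → Matrix (Fin n) (Fin n) ℝ) :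
    inner ℝ (embT M n X) (embT M n Y) = ∑ m, (X m * (Y m)ᵀ).trace := by
  simp only [PiLp.inner_apply, embT_apply, RCLike.inner_apply, conj_trivial, Fintype.sum_prod_type,
    Matrix.trace, Matrix.diag, Matrix.mul_apply, Matrix.transpose_apply]
  simp only [mul_comm]

theorem norm_embT (X : Fin M → Matrix (Fin n) (Fin n) ℝ) :
    ‖embT M n X‖ = √(∑ m, frobNorm (X m) ^ 2) := by
  rw [norm_eq_sqrt_real_inner, inner_embT]
  congr 1
  refine Finset.sum_congr rfl fun m _ => ?_
  rw [frobNorm_sq]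
  simp only [Matrix.trace, Matrix.diag, Matrix.mul_apply, Matrix.transpose_apply, sq]

noncomputable def sandwichEnd (Pi : Fin M → Matrix (Fin n) (Fin n) ℝ) :
    EuclideanSpace ℝ (Fin M × Fin n × Fin n) →ₗ[ℝ] EuclideanSpace ℝ (Fin M × Fin n × Fin n) :=
  embT M n ∘ₗ sandwichMap Pi

theorem L1sub_eq_ker_sandwichEnd (Pi : Fin M → Matrix (Fin n) (Fin n) ℝ) :
    L1sub Pi = LinearMap.ker (sandwichEnd Pi) :=
  (LinearMap.ker_comp_of_ker_eq_bot _ (LinearMap.ker_eq_bot.mpr embT_injective)).symm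

theorem sandwichEnd_embT (Pi : Fin M → Matrix (Fin n) (Fin n) ℝ)
    (X : Fin M → Matrix (Fin n) (Fin n) ℝ) :
    sandwichEnd Pi (embT M n X) = embT M n fun m => Pi m * X m * Pi m := rfl

theorem isSymmetricProjection_sandwichEnd {Pi : Fin M → Matrix (Fin n) (Fin n) ℝ}
    (hsymm : ∀ m, (Pi m)ᵀ = Pi m) (hidem : ∀ m, IsIdempotentElem (Pi m)) :
    (sandwichEnd Pi).IsSymmetricProjection where
  isIdempotentElem := by
    ext x : 1
    obtain ⟨X, rfl⟩ := embT_surjective x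
    rw [Module.End.mul_apply, sandwichEnd_embT, sandwichEnd_embT]
    congr 1
    funext m
    rw [← Matrix.mul_assoc, ← Matrix.mul_assoc, (hidem m).eq, Matrix.mul_assoc _ (Pi m),
      (hidem m).eq]
  isSymmetric x y := by
    obtain ⟨X, rfl⟩ := embT_surjective x
    obtain ⟨Y, rfl⟩ := embT_surjective y
    simp only [sandwichEnd_embT, inner_embT, Matrix.trace_sandwich_mul_transpose (hsymm _)]

theorem starProjection_L1sub_embT {Pi : Fin M → Matrix (Fin n) (Fin n) ℝ}
    (hsymm : ∀ m, (Pi m)ᵀ = Pi m) (hidem : ∀ m, IsIdempotentElem (Pi m))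
    (X : Fin M → Matrix (Fin n) (Fin n) ℝ) :
    (L1sub Pi).starProjection (embT M n X) = embT M n fun m => X m - Pi m * X m * Pi m := by
  simp_rw [L1sub_eq_ker_sandwichEnd, starProjection_ker_apply
    (isSymmetricProjection_sandwichEnd hsymm hidem), sandwichEnd_embT, ← map_sub]
  rfl

theorem kappaH_span_singleton (L : Submodule ℝ (EuclideanSpace ℝ (Fin M × Fin n × Fin n)))
    (v : EuclideanSpace ℝ (Fin M × Fin n × Fin n)) :
    kappaH L (Submodule.span ℝ {v}) = ‖L.starProjection v‖ / ‖v‖ :=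
  sSup_norm_starProjection_span_singleton_comp L v

end Flattening

theorem stmt7_general {n : ℕ} (K : Fin 2 → ℕ)
    (Q : Fin 2 → Matrix (Fin n) (Fin n) ℝ)
    (U : ∀ i : Fin 2, Matrix (Fin n) (Fin (K i)) ℝ)
    (hUo : ∀ i, (U i)ᵀ * U i = 1) :
    kappaH (L1sub (fun i => 1 - U i * (U i)ᵀ))
        (Submodule.span ℝ {embT 2 n ![Q 1, -(Q 0)]}) =
      Real.sqrt
        ((frobNorm (Q 0 - (1 - U 1 * (U 1)ᵀ) * Q 0 * (1 - U 1 * (U 1)ᵀ)) ^ 2 +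
            frobNorm (Q 1 - (1 - U 0 * (U 0)ᵀ) * Q 1 * (1 - U 0 * (U 0)ᵀ)) ^ 2) /
          (frobNorm (Q 0) ^ 2 + frobNorm (Q 1) ^ 2)) := by
  have hsymm (i : Fin 2) : (1 - U i * (U i)ᵀ)ᵀ = 1 - U i * (U i)ᵀ := by
    simp [Matrix.transpose_sub]
  have hidem (i : Fin 2) := Matrix.isIdempotentElem_one_sub_mul_transpose (hUo i)
  rw [kappaH_span_singleton, starProjection_L1sub_embT hsymm hidem, norm_embT, norm_embT,
    ← Real.sqrt_div' _ (by positivity)]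
  simp only [Fin.sum_univ_two, Matrix.cons_val_zero, Matrix.cons_val_one]
  rw [neg_sub_mul_neg_mul, frobNorm_neg, frobNorm_neg, add_comm (frobNorm (Q 1) ^ 2),
    add_comm (frobNorm (Q 1 - _) ^ 2)]

/-- Explicit formula for `κ_H` when `M = 2`. -/
theorem stmt7 {n : ℕ} (hn : 1 ≤ n) (K : Fin 2 → ℕ)
    (Q : Fin 2 → Matrix (Fin n) (Fin n) ℝ)
    (hQsymm : ∀ i, (Q i)ᵀ = Q i) (hQne : ∀ i, Q i ≠ 0)
    (U : ∀ i : Fin 2, Matrix (Fin n) (Fin (K i)) ℝ)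
    (hUo : ∀ i, (U i)ᵀ * U i = 1)
    (hUspan : ∀ i, Submodule.span ℝ (Set.range fun k => (U i)ᵀ k) =
      Submodule.span ℝ (Set.range fun j => (Q i)ᵀ j)) :
    kappaH (L1sub (fun i => 1 - U i * (U i)ᵀ))
        (Submodule.span ℝ {embT 2 n ![Q 1, -(Q 0)]}) =
      Real.sqrt
        ((frobNorm (Q 0 - (1 - U 1 * (U 1)ᵀ) * Q 0 * (1 - U 1 * (U 1)ᵀ)) ^ 2 +
            frobNorm (Q 1 - (1 - U 0 * (U 0)ᵀ) * Q 1 * (1 - U 0 * (U 0)ᵀ)) ^ 2) /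
          (frobNorm (Q 0) ^ 2 + frobNorm (Q 1) ^ 2)) :=
  stmt7_general K Q U hUo
end

section
/- Let Θ ∈ {0,1}^{n×K} be a membership matrix: each row of Θ has exactly one entry equal to 1, and each column of Θ is nonzero; let g_k denote the number of ones in the k-th column. Let B ∈ ℝ^{K×K} be symmetric. Then the K-th largest singular value of Θ B Θᵀ satisfies σ_K(Θ B Θᵀ) ≥ σ_K(B) · min_{1≤k≤K} g_k. -/
open Matrix BigOperators

/-- `singVal X k`: the `k`-th largest singular value of `X` (1-indexed),
i.e. the `k`-th largest square root of an eigenvalue of `Xᴴ X`. -/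
noncomputable def singVal {a b : ℕ} (X : Matrix (Fin a) (Fin b) ℝ) (k : ℕ) : ℝ :=
  ((((Finset.univ : Finset (Fin b)).val.map
      (fun i => Real.sqrt ((by simpa using Matrix.isHermitian_conjTranspose_mul_self X : (Xᵀ * X).IsHermitian).eigenvalues i))).sort
      (· ≤ ·)).getD (b - k) 0)

/-- The positive semidefinite square root of a positive semidefinite matrix
(junk value `0` otherwise). -/
noncomputable def matSqrt {d : ℕ} (A : Matrix (Fin d) (Fin d) ℝ) : Matrix (Fin d) (Fin d) ℝ :=
  open scoped Classical in
  if h : A.PosSemidef then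
    h.1.eigenvectorUnitary.1 * diagonal (Real.sqrt ∘ h.1.eigenvalues) *
      (star h.1.eigenvectorUnitary : Matrix (Fin d) (Fin d) ℝ) else 0

/-- `Πₒ(X) = X (XᵀX)^{-1/2}`, the projection onto the nearest orthonormal-column matrix. -/
noncomputable def Pio {a b : ℕ} (X : Matrix (Fin a) (Fin b) ℝ) : Matrix (Fin a) (Fin b) ℝ :=
  X * (matSqrt (Xᵀ * X))⁻¹

/-!
Since `Θᵀ Θ = diagonal g`, a vector `x = Θ y` of the `K`-dimensional column space of `Θ` satisfies
`Θ B Θᵀ x = Θ (B (diagonal g y))`, and the three factors `Θ`, `B`, `diagonal g` (the last measured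
against `‖Θ y‖`) stretch by at least `√(min g)`, `σ_K(B)`, `√(min g)`. So `M = Θ B Θᵀ` stretches
a `K`-dimensional subspace by at least `c = σ_K(B) · min g`, and by the Courant–Fischer principle
`Mᵀ M` then has `K` eigenvalues `≥ c²`, i.e. `σ_K(M) ≥ c`.
-/

open Finset

namespace List

variable {α : Type*} [LinearOrder α] {l : List α}

theorem Pairwise.getD_zero_le_of_mem (hl : l.Pairwise (· ≤ ·)) {x : α} (hx : x ∈ l) (d : α) :
    l.getD 0 d ≤ x := by
  cases l with
  | nil => simp at hx
  | cons a t =>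
    obtain rfl | hxt := mem_cons.mp hx
    · exact le_rfl
    · exact (pairwise_cons.mp hl).1 x hxt

theorem Pairwise.le_getD_length_sub_of_le_countP (hl : l.Pairwise (· ≤ ·)) {c : α} {k : ℕ}
    (hk : 0 < k) (hc : k ≤ l.countP (c ≤ ·)) (d : α) : c ≤ l.getD (l.length - k) d := by
  have hkl : k ≤ l.length := hc.trans countP_le_length
  set i := l.length - k
  have hi : i < l.length := by omega
  rw [getD_eq_getElem _ _ hi]
  by_contra! hlt
  -- the first `i + 1` entries are all below `c`, leaving only `k - 1` candidates
  have htake : (l.take (i + 1)).countP (c ≤ ·) = 0 := by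
    refine countP_eq_zero.mpr fun x hx => ?_
    obtain ⟨j, hj, rfl⟩ := mem_iff_getElem.mp hx
    have hji : j ≤ i := by simp at hj; omega
    have hle : l[j] ≤ l[i] := hl.rel_get_of_le (a := ⟨j, by omega⟩) (b := ⟨i, hi⟩) hji
    simpa using hle.trans_lt hlt
  have hdrop : (l.drop (i + 1)).countP (c ≤ ·) ≤ k - 1 :=
    countP_le_length.trans (by simp; omega)
  have hsplit := congrArg (countP (c ≤ ·)) (take_append_drop (i + 1) l)
  rw [countP_append] at hsplit
  omega

end List

lemma Matrix.dotProduct_transpose_mul_self_mulVec {m n R : Type*} [Fintype m] [Fintype n]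
    [CommSemiring R] (M : Matrix m n R) (x : n → R) :
    x ⬝ᵥ ((Mᵀ * M) *ᵥ x) = (M *ᵥ x) ⬝ᵥ (M *ᵥ x) := by
  rw [← mulVec_mulVec, dotProduct_mulVec, vecMul_transpose]

lemma Matrix.isHermitian_transpose_mul_self {m n : Type*} [Fintype m] (X : Matrix m n ℝ) :
    (Xᵀ * X).IsHermitian := by
  simpa using isHermitian_conjTranspose_mul_self X

namespace Matrix.IsHermitian

variable {n : Type*} [Fintype n] [DecidableEq n] {A : Matrix n n ℝ} (hA : A.IsHermitian)

local notation "U" => (hA.eigenvectorUnitary : Matrix n n ℝ)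

lemma dotProduct_self_eq_sum_sq (x : n → ℝ) : x ⬝ᵥ x = ∑ i, ((Uᵀ *ᵥ x) i) ^ 2 := by
  have hU : Uᵀᵀ * Uᵀ = 1 := by
    simpa [star_eq_conjTranspose] using (mem_unitaryGroup_iff).mp hA.eigenvectorUnitary.2
  simp only [sq]
  rw [← dotProduct, ← dotProduct_transpose_mul_self_mulVec, hU, one_mulVec]

lemma dotProduct_mulVec_eq_sum (x : n → ℝ) :
    x ⬝ᵥ (A *ᵥ x) = ∑ i, hA.eigenvalues i * ((Uᵀ *ᵥ x) i) ^ 2 := by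
  conv_lhs => rw [hA.spectral_theorem, Unitary.conjStarAlgAut_apply]
  rw [← mulVec_mulVec, ← mulVec_mulVec, dotProduct_mulVec, star_eq_conjTranspose,
    conjTranspose_eq_transpose_of_trivial, ← mulVec_transpose]
  simp only [dotProduct, mulVec_diagonal, Function.comp_apply, RCLike.ofReal_real_eq_id, id_eq]
  exact sum_congr rfl fun i _ => by ring

lemma mul_dotProduct_self_le {t : ℝ} (ht : ∀ i, t ≤ hA.eigenvalues i) (x : n → ℝ) :
    t * (x ⬝ᵥ x) ≤ x ⬝ᵥ (A *ᵥ x) := by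
  rw [hA.dotProduct_mulVec_eq_sum, hA.dotProduct_self_eq_sum_sq, mul_sum]
  exact sum_le_sum fun i _ => mul_le_mul_of_nonneg_right (ht i) (sq_nonneg _)

lemma finrank_le_card_eigenvalues_ge {t : ℝ} (V : Submodule ℝ (n → ℝ))
    (hV : ∀ x ∈ V, t * (x ⬝ᵥ x) ≤ x ⬝ᵥ (A *ᵥ x)) :
    Module.finrank ℝ V ≤ #{i | t ≤ hA.eigenvalues i} := by
  set T : Finset n := {i | t ≤ hA.eigenvalues i}
  by_contra! hlt
  -- dimension count: some nonzero `x ∈ V` is orthogonal to every eigenvector of eigenvalue `≥ t`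
  let f : V →ₗ[ℝ] (T → ℝ) :=
    (LinearMap.funLeft ℝ ℝ Subtype.val).comp ((mulVecLin Uᵀ).comp V.subtype)
  obtain ⟨⟨x, hxV⟩, hxf, hx0⟩ := Submodule.exists_mem_ne_zero_of_ne_bot <|
    f.ker_ne_bot_of_finrank_lt (by simpa using hlt)
  set c := Uᵀ *ᵥ x
  have hcT : ∀ i ∈ T, c i = 0 := fun i hi => congrFun hxf ⟨i, hi⟩
  have hc : ∃ i, c i ≠ 0 := by
    by_contra! hc
    refine hx0 (Subtype.ext (dotProduct_self_eq_zero.mp ?_))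
    simp [hA.dotProduct_self_eq_sum_sq, c, hc]
  have hpos : 0 < ∑ i, (t - hA.eigenvalues i) * c i ^ 2 := by
    refine sum_pos' (fun i _ => ?_) ?_
    · by_cases hi : i ∈ T
      · simp [hcT i hi]
      · have hiT : hA.eigenvalues i < t := by simpa [T] using hi
        exact mul_nonneg (sub_nonneg.mpr hiT.le) (sq_nonneg _)
    · obtain ⟨i, hi⟩ := hc
      have hiT : hA.eigenvalues i < t := by
        by_contra! h
        exact hi (hcT i (by simpa [T] using h))
      exact ⟨i, mem_univ i, mul_pos (sub_pos.mpr hiT) (by positivity)⟩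
  have hxV := hV x hxV
  rw [hA.dotProduct_mulVec_eq_sum, hA.dotProduct_self_eq_sum_sq, mul_sum] at hxV
  simp only [sub_mul, sum_sub_distrib] at hpos
  linarith

end Matrix.IsHermitian

section singVal

variable {a b : ℕ} (X : Matrix (Fin a) (Fin b) ℝ)

lemma singVal_eq_getD (k : ℕ) :
    singVal X k = ((univ.val.map fun i => √((isHermitian_transpose_mul_self X).eigenvalues i)).sort
      (· ≤ ·)).getD (b - k) 0 := rfl

lemma singVal_nonneg (k : ℕ) : 0 ≤ singVal X k := by
  rw [singVal_eq_getD, List.getD_eq_getElem?_getD]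
  rcases h : (_ : List ℝ)[b - k]? with _ | x
  · exact le_rfl
  · obtain ⟨i, -, rfl⟩ := Multiset.mem_map.mp ((Multiset.mem_sort _).mp (List.mem_of_getElem? h))
    exact Real.sqrt_nonneg _

lemma singVal_le_sqrt_eigenvalues (i : Fin b) :
    singVal X b ≤ √((isHermitian_transpose_mul_self X).eigenvalues i) := by
  rw [singVal_eq_getD, Nat.sub_self]
  exact (Multiset.pairwise_sort _ _).getD_zero_le_of_mem
    ((Multiset.mem_sort _).mpr (Multiset.mem_map_of_mem _ (mem_univ_val i))) 0

lemma sq_singVal_mul_dotProduct_self_le (w : Fin b → ℝ) :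
    singVal X b ^ 2 * (w ⬝ᵥ w) ≤ (X *ᵥ w) ⬝ᵥ (X *ᵥ w) := by
  set hX := isHermitian_transpose_mul_self X
  rw [← dotProduct_transpose_mul_self_mulVec]
  refine hX.mul_dotProduct_self_le (fun i => ?_) w
  have hnonneg : 0 ≤ hX.eigenvalues i := by
    simpa using (posSemidef_conjTranspose_mul_self X).eigenvalues_nonneg i
  calc singVal X b ^ 2 ≤ √(hX.eigenvalues i) ^ 2 := by
        gcongr
        exacts [singVal_nonneg X b, singVal_le_sqrt_eigenvalues X i]
    _ = hX.eigenvalues i := Real.sq_sqrt hnonneg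

lemma le_singVal_of_le_finrank {k : ℕ} (hk : 0 < k) (V : Submodule ℝ (Fin b → ℝ))
    (hkV : k ≤ Module.finrank ℝ V) {c : ℝ}
    (hV : ∀ x ∈ V, c ^ 2 * (x ⬝ᵥ x) ≤ (X *ᵥ x) ⬝ᵥ (X *ᵥ x)) :
    c ≤ singVal X k := by
  rcases lt_or_ge c 0 with hc | hc
  · exact hc.le.trans (singVal_nonneg X k)
  set hX := isHermitian_transpose_mul_self X
  set σs := univ.val.map fun i => √(hX.eigenvalues i)
  have hcount : k ≤ σs.countP (c ≤ ·) := by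
    rw [Multiset.countP_map]
    calc k ≤ #{i | c ^ 2 ≤ hX.eigenvalues i} := hkV.trans <|
          hX.finrank_le_card_eigenvalues_ge V fun x hx => by
            simpa only [dotProduct_transpose_mul_self_mulVec] using hV x hx
      _ ≤ #{i | c ≤ √(hX.eigenvalues i)} := card_le_card fun i => by
          simpa using Real.le_sqrt_of_sq_le
      _ = _ := rfl
  have := (Multiset.pairwise_sort σs (· ≤ ·)).le_getD_length_sub_of_le_countP hk
    (by rwa [← Multiset.coe_countP, Multiset.sort_eq]) 0
  rwa [Multiset.length_sort, Multiset.card_map, card_val, card_univ, Fintype.card_fin] at this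

end singVal

section OrthogonalColumns

variable {m K : Type*} [Fintype m] [Fintype K] [DecidableEq K] {Θ : Matrix m K ℝ} {g : K → ℝ}

lemma dotProduct_mulVec_self_eq_sum_of_transpose_mul_self_eq_diagonal
    (hΘ : Θᵀ * Θ = diagonal g) (z : K → ℝ) : (Θ *ᵥ z) ⬝ᵥ (Θ *ᵥ z) = ∑ k, g k * z k ^ 2 := by
  rw [← dotProduct_transpose_mul_self_mulVec, hΘ]
  simp only [mulVec_diagonal, dotProduct]
  exact sum_congr rfl fun k _ => by ring

lemma mul_dotProduct_self_le_of_transpose_mul_self_eq_diagonal (hΘ : Θᵀ * Θ = diagonal g)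
    {γ : ℝ} (hγ : ∀ k, γ ≤ g k) (z : K → ℝ) : γ * (z ⬝ᵥ z) ≤ (Θ *ᵥ z) ⬝ᵥ (Θ *ᵥ z) := by
  rw [dotProduct_mulVec_self_eq_sum_of_transpose_mul_self_eq_diagonal hΘ, dotProduct, mul_sum]
  exact sum_le_sum fun k _ => by nlinarith [hγ k, sq_nonneg (z k)]

lemma injective_mulVecLin_of_transpose_mul_self_eq_diagonal (hΘ : Θᵀ * Θ = diagonal g)
    {γ : ℝ} (hγ : 0 < γ) (hγg : ∀ k, γ ≤ g k) : Function.Injective Θ.mulVecLin := by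
  refine (injective_iff_map_eq_zero _).mpr fun z hz => dotProduct_self_eq_zero.mp ?_
  have hle := mul_dotProduct_self_le_of_transpose_mul_self_eq_diagonal hΘ hγg z
  rw [← mulVecLin_apply, hz, zero_dotProduct] at hle
  exact le_antisymm (nonpos_of_mul_nonpos_right hle hγ)
    (sum_nonneg fun i _ => mul_self_nonneg (z i))

lemma sq_mul_dotProduct_le_of_transpose_mul_self_eq_diagonal (hΘ : Θᵀ * Θ = diagonal g)
    {γ : ℝ} (hγ : 0 ≤ γ) (hγg : ∀ k, γ ≤ g k) (B : Matrix K K ℝ) {s : ℝ}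
    (hB : ∀ w, s ^ 2 * (w ⬝ᵥ w) ≤ (B *ᵥ w) ⬝ᵥ (B *ᵥ w)) (y : K → ℝ) :
    (s * γ) ^ 2 * ((Θ *ᵥ y) ⬝ᵥ (Θ *ᵥ y)) ≤
      ((Θ * B * Θᵀ) *ᵥ (Θ *ᵥ y)) ⬝ᵥ ((Θ * B * Θᵀ) *ᵥ (Θ *ᵥ y)) := by
  set w := diagonal g *ᵥ y
  have hx : (Θ * B * Θᵀ) *ᵥ (Θ *ᵥ y) = Θ *ᵥ (B *ᵥ w) := by
    simp only [w, mulVec_mulVec, Matrix.mul_assoc, hΘ]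
  have hw : γ * ((Θ *ᵥ y) ⬝ᵥ (Θ *ᵥ y)) ≤ w ⬝ᵥ w := by
    rw [dotProduct_mulVec_self_eq_sum_of_transpose_mul_self_eq_diagonal hΘ, mul_sum]
    simp only [w, mulVec_diagonal, dotProduct]
    exact sum_le_sum fun k _ => by
      nlinarith [hγg k, mul_nonneg (hγ.trans (hγg k)) (sq_nonneg (y k))]
  have hΘBw := mul_dotProduct_self_le_of_transpose_mul_self_eq_diagonal hΘ hγg (B *ᵥ w)
  rw [hx]
  calc (s * γ) ^ 2 * ((Θ *ᵥ y) ⬝ᵥ (Θ *ᵥ y))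
        = γ * (s ^ 2 * (γ * ((Θ *ᵥ y) ⬝ᵥ (Θ *ᵥ y)))) := by ring
    _ ≤ γ * (s ^ 2 * (w ⬝ᵥ w)) := by gcongr
    _ ≤ γ * ((B *ᵥ w) ⬝ᵥ (B *ᵥ w)) := by gcongr; exact hB w
    _ ≤ _ := hΘBw

end OrthogonalColumns

lemma transpose_mul_self_eq_diagonal_card {m K : Type*} [Fintype m] [Fintype K] [DecidableEq K]
    {Θ : Matrix m K ℝ} (h01 : ∀ i k, Θ i k = 0 ∨ Θ i k = 1) (hrow : ∀ i, ∃! k, Θ i k = 1) :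
    Θᵀ * Θ = diagonal fun k => (#{i | Θ i k = 1} : ℝ) := by
  ext k l
  simp only [mul_apply, transpose_apply, diagonal_apply]
  split_ifs with hkl
  · subst hkl
    rw [card_filter, Nat.cast_sum]
    refine sum_congr rfl fun i _ => ?_
    rcases h01 i k with h | h <;> simp [h]
  · refine sum_eq_zero fun i _ => ?_
    rcases h01 i k with h | h
    · simp [h]
    rcases h01 i l with h' | h'
    · simp [h']
    · exact absurd ((hrow i).unique h h') hkl

theorem stmt8_general {n K : ℕ} (Θ : Matrix (Fin n) (Fin K) ℝ)
    (h01 : ∀ i k, Θ i k = 0 ∨ Θ i k = 1)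
    (hrow : ∀ i, ∃! k, Θ i k = 1)
    (hcol : ∀ k, ∃ i, Θ i k = 1)
    (B : Matrix (Fin K) (Fin K) ℝ) :
    singVal B K * (⨅ k : Fin K,
        ((Finset.univ.filter fun i => Θ i k = 1).card : ℝ)) ≤
      singVal (Θ * B * Θᵀ) K := by
  rcases Nat.eq_zero_or_pos K with rfl | hK
  · simp [singVal_eq_getD]
  have : Nonempty (Fin K) := ⟨⟨0, hK⟩⟩
  set g : Fin K → ℝ := fun k => #{i | Θ i k = 1}
  have hg : ∀ k, 1 ≤ g k := fun k => by
    obtain ⟨i, hi⟩ := hcol k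
    exact Nat.one_le_cast.mpr (card_pos.mpr ⟨i, by simp [hi]⟩)
  have hγ : 1 ≤ ⨅ k, g k := le_ciInf hg
  have hγg : ∀ k, ⨅ k, g k ≤ g k := ciInf_le (Set.finite_range g).bddBelow
  have hΘ := transpose_mul_self_eq_diagonal_card h01 hrow
  have hinj := injective_mulVecLin_of_transpose_mul_self_eq_diagonal hΘ (by linarith) hγg
  refine le_singVal_of_le_finrank _ hK (LinearMap.range Θ.mulVecLin)
    (by simp [LinearMap.finrank_range_of_inj hinj]) ?_
  rintro _ ⟨y, rfl⟩
  exact sq_mul_dotProduct_le_of_transpose_mul_self_eq_diagonal hΘ (by linarith) hγg B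
    (sq_singVal_mul_dotProduct_self_le B) y

/-- Smallest singular value of `Θ B Θᵀ` for a membership matrix `Θ`. -/
theorem stmt8 {n K : ℕ} (Θ : Matrix (Fin n) (Fin K) ℝ)
    (h01 : ∀ i k, Θ i k = 0 ∨ Θ i k = 1)
    (hrow : ∀ i, ∃! k, Θ i k = 1)
    (hcol : ∀ k, ∃ i, Θ i k = 1)
    (B : Matrix (Fin K) (Fin K) ℝ) (hB : Bᵀ = B) :
    singVal B K * (⨅ k : Fin K,
        ((Finset.univ.filter fun i => Θ i k = 1).card : ℝ)) ≤
      singVal (Θ * B * Θᵀ) K :=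
  stmt8_general Θ h01 hrow hcol B
end

section
/- Let Q ∈ ℝ^{M×M} be symmetric positive definite, and let X, S, Y ∈ ℝ^{M×M} be such that S is symmetric, Y is skew-symmetric, and QY − X = S. Then max(‖QY‖_F, ‖S‖_F) ≤ 2‖X‖_F. -/
open Matrix BigOperators

/-!
Put `A = QY` and `B = YQ`. Transposing `QY - X = S` gives `-YQ - Xᵀ = S`, so `A + B = X - Xᵀ`
and `A - B = 2S + X + Xᵀ`. Since `‖A + B‖² - ‖A - B‖² = 4 tr(AᵀB)` and `AᵀB = (YᵀQY) Q` is a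
product of two positive semidefinite matrices, `‖A - B‖ ≤ ‖A + B‖ ≤ 2‖X‖`. Then `2A` and
`2S = (A - B) - (X + Xᵀ)` are sums of two matrices of norm at most `2‖X‖`.
-/

attribute [local instance] Matrix.frobeniusNormedAddCommGroup Matrix.frobeniusNormedSpace

lemma two_mul_norm_le_norm_sub_add_norm_add {E : Type*} [NormedAddCommGroup E] [NormedSpace ℝ E]
    (a b : E) : 2 * ‖a‖ ≤ ‖a - b‖ + ‖a + b‖ :=
  calc 2 * ‖a‖ = ‖(a - b) + (a + b)‖ := by
        rw [← Real.norm_two, ← norm_smul]; congr 1; module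
    _ ≤ ‖a - b‖ + ‖a + b‖ := norm_add_le _ _

namespace Matrix

variable {m n : Type*} [Fintype m] [Fintype n]

open scoped ComplexOrder MatrixOrder in
lemma PosSemidef.trace_mul_nonneg {𝕜 : Type*} [RCLike 𝕜] {A B : Matrix n n 𝕜}
    (hA : A.PosSemidef) (hB : B.PosSemidef) : 0 ≤ (A * B).trace := by
  classical
  obtain ⟨C, rfl⟩ := CStarAlgebra.nonneg_iff_eq_star_mul_self.mp hA.nonneg
  rw [star_eq_conjTranspose, mul_assoc, trace_mul_comm]
  exact (hB.mul_mul_conjTranspose_same C).trace_nonneg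

lemma frobenius_norm_sq_eq_trace (A : Matrix m n ℝ) : ‖A‖ ^ 2 = (Aᵀ * A).trace := by
  rw [frobenius_norm_def, ← Real.sqrt_eq_rpow, Real.sq_sqrt (by positivity)]
  simp only [trace, diag, mul_apply, transpose_apply, Real.rpow_two, Real.norm_eq_abs, sq,
    abs_mul_abs_self]
  exact Finset.sum_comm

lemma frobenius_norm_add_sq (A B : Matrix m n ℝ) :
    ‖A + B‖ ^ 2 = ‖A - B‖ ^ 2 + 4 * (Aᵀ * B).trace := by
  have hBA : (Bᵀ * A).trace = (Aᵀ * B).trace := by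
    rw [← trace_transpose, transpose_mul, transpose_transpose]
  simp only [frobenius_norm_sq_eq_trace, transpose_add, transpose_sub, Matrix.add_mul,
    Matrix.mul_add, Matrix.sub_mul, Matrix.mul_sub, trace_add, trace_sub, hBA]
  ring

lemma frobenius_norm_sub_le_norm_add {A B : Matrix m n ℝ} (h : 0 ≤ (Aᵀ * B).trace) :
    ‖A - B‖ ≤ ‖A + B‖ :=
  (sq_le_sq₀ (norm_nonneg _) (norm_nonneg _)).mp <| by
    rw [frobenius_norm_add_sq]; linarith

lemma PosSemidef.frobenius_norm_mul_sub_mul_le {Q : Matrix n n ℝ} (hQ : Q.PosSemidef)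
    (Y : Matrix n n ℝ) : ‖Q * Y - Y * Q‖ ≤ ‖Q * Y + Y * Q‖ := by
  apply frobenius_norm_sub_le_norm_add
  have hQt : Qᵀ = Q := hQ.isHermitian.eq
  rw [transpose_mul, hQt, ← mul_assoc]
  exact (hQ.conjTranspose_mul_mul_same Y).trace_mul_nonneg hQ

end Matrix

lemma frobNorm_eq_norm {a b : ℕ} (X : Matrix (Fin a) (Fin b) ℝ) : frobNorm X = ‖X‖ := by
  rw [frobenius_norm_def, frobNorm, Real.sqrt_eq_rpow]
  simp only [Real.rpow_two, Real.norm_eq_abs, sq_abs]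

/-- If `Q` is symmetric positive definite, `S` symmetric, `Y` skew-symmetric
and `QY − X = S`, then `max(‖QY‖_F, ‖S‖_F) ≤ 2‖X‖_F`. -/
theorem stmt9 {M : ℕ} (Q X S Y : Matrix (Fin M) (Fin M) ℝ)
    (hQ : Q.PosDef) (hS : Sᵀ = S) (hY : Yᵀ = -Y) (h : Q * Y - X = S) :
    max (frobNorm (Q * Y)) (frobNorm S) ≤ 2 * frobNorm X := by
  have hQY : Q * Y = S + X := by rw [← h]; abel
  have hYQ : Y * Q = -(S + Xᵀ) := by
    have hQt : Qᵀ = Q := hQ.isHermitian.eq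
    have := congrArg transpose h
    rw [transpose_sub, transpose_mul, hQt, hY, hS, neg_mul] at this
    rw [← this]; abel
  have hXt : ‖Xᵀ‖ = ‖X‖ := frobenius_norm_transpose X
  have hsum : ‖Q * Y + Y * Q‖ ≤ 2 * ‖X‖ := by
    rw [hQY, hYQ, show S + X + -(S + Xᵀ) = X - Xᵀ by abel]
    linarith [norm_sub_le X Xᵀ]
  have hdiff : ‖Q * Y - Y * Q‖ ≤ 2 * ‖X‖ :=
    (hQ.posSemidef.frobenius_norm_mul_sub_mul_le Y).trans hsum
  have hS' : ‖S - (S + X + Xᵀ)‖ + ‖S + (S + X + Xᵀ)‖ ≤ 4 * ‖X‖ := by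
    rw [show S - (S + X + Xᵀ) = -(X + Xᵀ) by abel, norm_neg,
      show S + (S + X + Xᵀ) = Q * Y - Y * Q by rw [hQY, hYQ]; abel]
    linarith [norm_add_le X Xᵀ]
  rw [frobNorm_eq_norm, frobNorm_eq_norm, frobNorm_eq_norm]
  refine max_le ?_ ?_
  · linarith [two_mul_norm_le_norm_sub_add_norm_add (Q * Y) (Y * Q)]
  · linarith [two_mul_norm_le_norm_sub_add_norm_add S (S + X + Xᵀ)]
end

section
/- Let Q_* ∈ ℝ^{M×n×n} have symmetric slices. For a fixed m, let U_m have orthonormal columns spanning the column space of Q_*(m), Π_{U_m⊥} = I − U_mU_mᵀ, and let Π_{T,K_m}(Q_*) ∈ ℝ^{M×n×n} be the tensor with slices Q_*(j) − Π_{U_m⊥} Q_*(j) Π_{U_m⊥}, j = 1,…,M. Then the spectral norm of the M×M matrix Q_* ×_{2,3} Π_{T,K_m}(Q_*) satisfies ‖Q_* ×_{2,3} Π_{T,K_m}(Q_*)‖ ≤ 2·‖Q_* ×_{2,3} Q_*‖. -/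
open Matrix BigOperators

/-!
Vectorizing the slices turns `X ×_{2,3} Y` into `Aᵀ B`, where the columns of `A` and `B` are
the vectorized slices of `X` and `Y`, and turns `X(j) ↦ X(j) − P X(j) P` into multiplication by
`D = 1 − P ⊗ P`. For `P = 1 − U Uᵀ` with `Uᵀ U = 1`, `P` and hence `D` are orthogonal projections,
so `Q ×_{2,3} Π(Q) = Aᵀ D A = (D A)ᵀ (D A)` has norm `‖D A‖² ≤ ‖A‖² = ‖Aᵀ A‖ = ‖Q ×_{2,3} Q‖`.
-/

open scoped Matrix.Norms.L2Operator Kronecker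

theorem IsStarProjection.kronecker {m n R : Type*} [Fintype m] [Fintype n] [CommRing R]
    [StarRing R] {P : Matrix m m R} {P' : Matrix n n R} (hP : IsStarProjection P)
    (hP' : IsStarProjection P') : IsStarProjection (P ⊗ₖ P') where
  isIdempotentElem := by
    rw [IsIdempotentElem, ← mul_kronecker_mul, hP.isIdempotentElem.eq, hP'.isIdempotentElem.eq]
  isSelfAdjoint := by
    rw [IsSelfAdjoint, star_eq_conjTranspose, conjTranspose_kronecker, ← star_eq_conjTranspose,
      ← star_eq_conjTranspose, hP.isSelfAdjoint.star_eq, hP'.isSelfAdjoint.star_eq]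

namespace Matrix

variable {m n : Type*} [Fintype m] [Fintype n]

theorem isStarProjection_mul_conjTranspose {R : Type*} [CommRing R] [StarRing R] [DecidableEq n]
    {U : Matrix m n R} (hU : Uᴴ * U = 1) : IsStarProjection (U * Uᴴ) where
  isIdempotentElem := by
    rw [IsIdempotentElem, Matrix.mul_assoc, ← Matrix.mul_assoc Uᴴ, hU, Matrix.one_mul]
  isSelfAdjoint := by
    rw [IsSelfAdjoint, star_eq_conjTranspose, conjTranspose_mul, conjTranspose_conjTranspose]

theorem l2_opNorm_conjTranspose_mul_mul_le {𝕜 : Type*} [RCLike 𝕜] [DecidableEq m] [DecidableEq n]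
    {D : Matrix m m 𝕜} (hD : IsStarProjection D) (A : Matrix m n 𝕜) :
    ‖Aᴴ * (D * A)‖ ≤ ‖Aᴴ * A‖ := by
  have hDA : ‖D * A‖ ≤ ‖A‖ :=
    (l2_opNorm_mul D A).trans (mul_le_of_le_one_left (norm_nonneg A) hD.norm_le)
  calc ‖Aᴴ * (D * A)‖ = ‖(D * A)ᴴ * (D * A)‖ := by
        rw [conjTranspose_mul, ← star_eq_conjTranspose D, hD.isSelfAdjoint.star_eq,
          Matrix.mul_assoc, ← Matrix.mul_assoc D, hD.isIdempotentElem.eq]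
    _ = ‖D * A‖ * ‖D * A‖ := l2_opNorm_conjTranspose_mul_self _
    _ ≤ ‖A‖ * ‖A‖ := mul_self_le_mul_self (norm_nonneg _) hDA
    _ = ‖Aᴴ * A‖ := (l2_opNorm_conjTranspose_mul_self A).symm

end Matrix

/-- The transpose of the mode-1 unfolding of `X`. -/
def vecSlices {J n : ℕ} (X : Fin J → Matrix (Fin n) (Fin n) ℝ) :
    Matrix (Fin n × Fin n) (Fin J) ℝ :=
  Matrix.of fun p j => (X j).vec p

theorem prod23_eq_transpose_mul {J J' n : ℕ} (X : Fin J → Matrix (Fin n) (Fin n) ℝ)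
    (Y : Fin J' → Matrix (Fin n) (Fin n) ℝ) :
    prod23 X Y = (vecSlices X)ᵀ * vecSlices Y := by
  ext i j
  rw [prod23, of_apply, trace_mul_comm, ← vec_dotProduct_vec, dotProduct_comm]
  rfl

theorem vecSlices_piT {J n : ℕ} (P : Matrix (Fin n) (Fin n) ℝ)
    (X : Fin J → Matrix (Fin n) (Fin n) ℝ) :
    vecSlices (piT P X) = (1 - Pᵀ ⊗ₖ P) * vecSlices X := by
  ext p j
  change (X j - P * X j * P).vec p = ((1 - Pᵀ ⊗ₖ P) *ᵥ (X j).vec) p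
  rw [sub_mulVec, one_mulVec, kronecker_mulVec_vec, transpose_transpose, vec_sub]

theorem specNorm_eq_l2_opNorm {a b : ℕ} (X : Matrix (Fin a) (Fin b) ℝ) : specNorm X = ‖X‖ := rfl

theorem l2_opNorm_prod23_piT_le {J n : ℕ} {P : Matrix (Fin n) (Fin n) ℝ}
    (hP : IsStarProjection P) (X : Fin J → Matrix (Fin n) (Fin n) ℝ) :
    ‖prod23 X (piT P X)‖ ≤ ‖prod23 X X‖ := by
  have hPt : Pᵀ = P := by
    rw [← conjTranspose_eq_transpose_of_trivial, ← star_eq_conjTranspose, hP.isSelfAdjoint.star_eq]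
  rw [prod23_eq_transpose_mul, prod23_eq_transpose_mul, vecSlices_piT, hPt,
    ← conjTranspose_eq_transpose_of_trivial]
  exact l2_opNorm_conjTranspose_mul_mul_le (hP.kronecker hP).one_sub _

theorem stmt15_general {M n Km : ℕ}
    (Q : Fin M → Matrix (Fin n) (Fin n) ℝ)
    (U : Matrix (Fin n) (Fin Km) ℝ) (hUo : Uᵀ * U = 1) :
    specNorm (prod23 Q (piT (1 - U * Uᵀ) Q)) ≤ 2 * specNorm (prod23 Q Q) := by
  rw [← conjTranspose_eq_transpose_of_trivial] at hUo ⊢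
  have hP : IsStarProjection (1 - U * Uᴴ) := (isStarProjection_mul_conjTranspose hUo).one_sub
  rw [specNorm_eq_l2_opNorm, specNorm_eq_l2_opNorm]
  linarith [l2_opNorm_prod23_piT_le hP Q, norm_nonneg (prod23 Q Q)]

/-- `‖Q_* ×_{2,3} Π_{T,K_m}(Q_*)‖ ≤ 2‖Q_* ×_{2,3} Q_*‖`. -/
theorem stmt15 {M n Km : ℕ}
    (Q : Fin M → Matrix (Fin n) (Fin n) ℝ) (hQsymm : ∀ j, (Q j)ᵀ = Q j)
    (m : Fin M)
    (U : Matrix (Fin n) (Fin Km) ℝ) (hUo : Uᵀ * U = 1)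
    (hUspan : Submodule.span ℝ (Set.range fun k => Uᵀ k) =
      Submodule.span ℝ (Set.range fun j => (Q m)ᵀ j)) :
    specNorm (prod23 Q (piT (1 - U * Uᵀ) Q)) ≤ 2 * specNorm (prod23 Q Q) :=
  stmt15_general Q U hUo
end

section
/- In the Mixture Multilayer Stochastic Block Model described in the context, for every m ∈ {1,…,M} and every t > 0: P( ‖Π_{T,K_m}(Q_*) ×_{2,3} Π_{T,K_m}(Δ)‖_F > 3 t n L p_max^{3/2} ) ≤ 2 K̇ L · exp( −(t²/2) / ( 1 + t/(3√(p_max · n · g_min)) ) ), where Π_{T,K_m}(Q_*) ∈ ℝ^{M×n×n}, Π_{T,K_m}(Δ) ∈ ℝ^{L×n×n}, and the Frobenius norm is that of the resulting M×L matrix. -/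
/-!
Let `S = U_m U_mᵀ`, the matrix averaging over the communities of the `m`-th layer class. It is
symmetric, idempotent and row-stochastic, so `Π_{T,K_m}` is an orthogonal projection for the
trace inner product and the `(m', l)` entry of the product is `Tr(W Δ(l)ᵀ)` with
`W = Π_{T,K_m}(Q_*(m')) = S Q + Q S - S Q S`. As `Δ(l)` is symmetric, this is a weighted sum of
the independent centred Bernoulli variables `A(l,i,j) - P(l,i,j)`, `i ≤ j`, with weight
`2 W(i,j)` off the diagonal. Averages of `Q_*(m')` stay in `[0, a]`, `a = √L_{m'} p_max`, so
`|W| ≤ 2a` (and `W = Q_*(m')` when `n < 2 g_min`, where every partition is trivial). This bounds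
the weights and the variance, and Bernstein's inequality, proved by the Chernoff method from
`eˣ - 1 - x ≤ x² / (2 (1 - |x| / 3))`, bounds the tail of each entry at level
`3 t n a √p_max`. These levels have squares summing to `(3 t n L p_max^{3/2})²`, so a union
bound over the `M L ≤ K̇ L` entries gives the claim.
-/

open Matrix BigOperators MeasureTheory

open Finset Real ProbabilityTheory

lemma two_mul_three_pow_le_factorial (n : ℕ) : 2 * 3 ^ n ≤ (n + 2).factorial := by
  induction n with
  | zero => simp [Nat.factorial]
  | succ n ih =>
    rw [Nat.factorial_succ, pow_succ]
    nlinarith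

lemma exp_sub_one_sub_le {x b : ℝ} (hxb : |x| ≤ b) (hb : b < 3) :
    exp x - 1 - x ≤ x ^ 2 / (2 * (1 - b / 3)) := by
  have hb0 : 0 ≤ b := (abs_nonneg x).trans hxb
  have hexp : HasSum (fun n : ℕ => x ^ (n + 2) / (n + 2).factorial) (exp x - 1 - x) := by
    have := (hasSum_nat_add_iff' 2).mpr (exp_eq_exp_ℝ ▸ NormedSpace.expSeries_div_hasSum_exp x)
    simpa [Finset.sum_range_succ, sub_sub] using this
  have hgeom : HasSum (fun n : ℕ => x ^ 2 / 2 * (b / 3) ^ n) (x ^ 2 / (2 * (1 - b / 3))) := by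
    have := (hasSum_geometric_of_lt_one (by positivity) (by linarith : b / 3 < 1)).mul_left
      (x ^ 2 / 2)
    rwa [← div_eq_mul_inv, div_div] at this
  refine hasSum_le (fun n => ?_) hexp hgeom
  have hfact : (2 * 3 ^ n : ℝ) ≤ (n + 2).factorial := by
    exact_mod_cast two_mul_three_pow_le_factorial n
  have hpow : x ^ (n + 2) ≤ x ^ 2 * b ^ n := by
    calc x ^ (n + 2) ≤ |x| ^ (n + 2) := (le_abs_self _).trans (abs_pow x _).le
      _ = x ^ 2 * |x| ^ n := by rw [pow_add, sq_abs, mul_comm]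
      _ ≤ x ^ 2 * b ^ n := by gcongr
  calc x ^ (n + 2) / (n + 2).factorial ≤ x ^ 2 * b ^ n / (2 * 3 ^ n) :=
        (div_le_div_of_nonneg_right hpow (by positivity)).trans
          (div_le_div_of_nonneg_left (by positivity) (by positivity) hfact)
    _ = x ^ 2 / 2 * (b / 3) ^ n := by rw [div_pow]; ring

section Bernstein

variable {Ω : Type*} [MeasurableSpace Ω] {μ : Measure Ω}

structure IsBernoulli (μ : Measure Ω) (χ : Ω → ℝ) (ρ : ℝ) : Prop where
  measurable : Measurable χ
  eq_zero_or_eq_one : ∀ ω, χ ω = 0 ∨ χ ω = 1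
  nonneg : 0 ≤ ρ
  measure_eq_one : μ {ω | χ ω = 1} = ENNReal.ofReal ρ

namespace IsBernoulli

variable {χ : Ω → ℝ} {ρ : ℝ}

lemma eq_indicator (h : IsBernoulli μ χ ρ) : χ = (χ ⁻¹' {1}).indicator 1 := by
  ext ω
  rcases h.eq_zero_or_eq_one ω with hω | hω <;> simp [Set.indicator, hω]

lemma integral_eq (h : IsBernoulli μ χ ρ) : ∫ ω, χ ω ∂μ = ρ := by
  rw [h.eq_indicator, integral_indicator_one (h.measurable (measurableSet_singleton 1)),
    measureReal_def]
  change (μ {ω | χ ω = 1}).toReal = ρ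
  rw [h.measure_eq_one, ENNReal.toReal_ofReal h.nonneg]

lemma exp_mul_sub_eq (h : IsBernoulli μ χ ρ) (θ : ℝ) (ω : Ω) :
    exp (θ * (χ ω - ρ)) = exp (-(θ * ρ)) * (1 + (exp θ - 1) * χ ω) := by
  rcases h.eq_zero_or_eq_one ω with hω | hω <;> rw [hω]
  · simp
  · rw [mul_one, add_sub_cancel, ← exp_add]
    ring_nf

variable [IsFiniteMeasure μ]

lemma integrable (h : IsBernoulli μ χ ρ) : Integrable χ μ := by
  rw [h.eq_indicator]
  exact (integrable_const 1).indicator (h.measurable (measurableSet_singleton 1))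

lemma integrable_exp_mul_sub (h : IsBernoulli μ χ ρ) (θ : ℝ) :
    Integrable (fun ω => exp (θ * (χ ω - ρ))) μ := by
  simp_rw [h.exp_mul_sub_eq θ]
  exact ((integrable_const 1).add (h.integrable.const_mul _)).const_mul _

lemma mgf_sub_eq [IsProbabilityMeasure μ] (h : IsBernoulli μ χ ρ) (θ : ℝ) :
    mgf (fun ω => χ ω - ρ) μ θ = exp (-(θ * ρ)) * (1 + ρ * (exp θ - 1)) := by
  simp_rw [mgf, h.exp_mul_sub_eq θ]
  rw [integral_const_mul, integral_add (integrable_const 1) (h.integrable.const_mul _),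
    integral_const_mul, h.integral_eq]
  simp [mul_comm]

lemma mgf_sub_le [IsProbabilityMeasure μ] (h : IsBernoulli μ χ ρ) {θ b : ℝ}
    (hθ : |θ| ≤ b) (hb : b < 3) :
    mgf (fun ω => χ ω - ρ) μ θ ≤ exp (ρ * θ ^ 2 / (2 * (1 - b / 3))) := by
  rw [h.mgf_sub_eq]
  calc exp (-(θ * ρ)) * (1 + ρ * (exp θ - 1))
      ≤ exp (-(θ * ρ)) * exp (ρ * (exp θ - 1)) := by
        gcongr
        linarith [add_one_le_exp (ρ * (exp θ - 1))]
    _ = exp (ρ * (exp θ - 1 - θ)) := by rw [← exp_add]; ring_nf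
    _ ≤ exp (ρ * θ ^ 2 / (2 * (1 - b / 3))) := by
        rw [mul_div_assoc]
        gcongr
        · exact h.nonneg
        · exact exp_sub_one_sub_le hθ hb

end IsBernoulli

variable [IsProbabilityMeasure μ] {ι : Type*} [Fintype ι] {χ : ι → Ω → ℝ} {ρ c : ι → ℝ}

lemma measure_sum_ge_le_of_isBernoulli (hχ : ∀ q, IsBernoulli μ (χ q) (ρ q))
    (hind : iIndepFun χ μ) {b V s : ℝ} (hc : ∀ q, |c q| ≤ b) (hb : 0 ≤ b)
    (hV : ∑ q, c q ^ 2 * ρ q ≤ V) (hV0 : 0 < V) (hs : 0 ≤ s) :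
    μ {ω | s ≤ ∑ q, c q * (χ q ω - ρ q)}
      ≤ ENNReal.ofReal (exp (-s ^ 2 / (2 * (V + b * s / 3)))) := by
  set D := V + b * s / 3 with hD_def
  have hD : 0 < D := by positivity
  -- at `λ = s / D` one has `1 - λ b / 3 = V / D`, and `-λ s + λ² D / 2 = -s² / (2 D)`
  set l := s / D with hl_def
  have hl : 0 ≤ l := by positivity
  have hlb : l * b < 3 := by
    rw [hl_def, div_mul_eq_mul_div, div_lt_iff₀ hD, hD_def]; nlinarith
  have hden : 1 - l * b / 3 = V / D := by rw [hl_def, hD_def]; field_simp; ring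
  set Y : ι → Ω → ℝ := fun q ω => c q * (χ q ω - ρ q)
  have hYm : ∀ q, Measurable (Y q) := fun q => ((hχ q).measurable.sub_const _).const_mul _
  have hYind : iIndepFun Y μ :=
    hind.comp _ fun q => (measurable_id.sub_const _).const_mul _
  have hsum : ∀ ω, (∑ q, Y q) ω = ∑ q, c q * (χ q ω - ρ q) := fun ω => sum_apply ..
  have hint : Integrable (fun ω => exp (l * (∑ q, Y q) ω)) μ :=
    hYind.integrable_exp_mul_sum hYm fun q _ => by
      simpa [Y, mul_assoc, mul_left_comm] using (hχ q).integrable_exp_mul_sub (l * c q)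
  have hmgf : mgf (∑ q, Y q) μ l ≤ exp (l ^ 2 * V / (2 * (1 - l * b / 3))) := by
    rw [hYind.mgf_sum hYm]
    calc ∏ q, mgf (Y q) μ l ≤ ∏ q, exp (ρ q * (c q * l) ^ 2 / (2 * (1 - l * b / 3))) := by
          refine Finset.prod_le_prod (fun q _ => mgf_nonneg) fun q _ => ?_
          rw [mgf_const_mul]
          refine (hχ q).mgf_sub_le ?_ hlb
          rw [abs_mul, abs_of_nonneg hl, mul_comm]
          exact mul_le_mul_of_nonneg_left (hc q) hl
      _ = exp (l ^ 2 * (∑ q, c q ^ 2 * ρ q) / (2 * (1 - l * b / 3))) := by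
          rw [← exp_sum, Finset.mul_sum, Finset.sum_div]
          congr 1; refine Finset.sum_congr rfl fun q _ => ?_; ring
      _ ≤ exp (l ^ 2 * V / (2 * (1 - l * b / 3))) := by
          have : 0 < 1 - l * b / 3 := by linarith
          gcongr
  have hexp : exp (-l * s) * exp (l ^ 2 * V / (2 * (1 - l * b / 3)))
      = exp (-s ^ 2 / (2 * D)) := by
    rw [← exp_add, hden, hl_def]; congr 1; field_simp; ring
  have hreal := (measure_ge_le_exp_mul_mgf s hl hint).trans
    ((mul_le_mul_of_nonneg_left hmgf (exp_pos _).le).trans hexp.le)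
  simp_rw [hsum] at hreal
  rw [← ENNReal.ofReal_toReal (measure_ne_top μ _)]
  exact ENNReal.ofReal_le_ofReal hreal

lemma measure_abs_sum_gt_le_of_isBernoulli (hχ : ∀ q, IsBernoulli μ (χ q) (ρ q))
    (hind : iIndepFun χ μ) {b σ t : ℝ} (hc : ∀ q, |c q| ≤ b) (hb : 0 ≤ b)
    (hV : ∑ q, c q ^ 2 * ρ q ≤ σ ^ 2) (hσ : 0 < σ) (ht : 0 ≤ t) :
    μ {ω | t * σ < |∑ q, c q * (χ q ω - ρ q)|}
      ≤ ENNReal.ofReal (2 * exp (-(t ^ 2 / 2) / (1 + t * b / (3 * σ)))) := by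
  have hexp : -(t * σ) ^ 2 / (2 * (σ ^ 2 + b * (t * σ) / 3))
      = -(t ^ 2 / 2) / (1 + t * b / (3 * σ)) := by
    field_simp
  have hupper := measure_sum_ge_le_of_isBernoulli hχ hind hc hb hV (by positivity)
    (by positivity : 0 ≤ t * σ)
  have hlower := measure_sum_ge_le_of_isBernoulli (c := fun q => -c q) hχ hind
    (fun q => (abs_neg (c q)).trans_le (hc q)) hb (by simpa using hV) (by positivity)
    (by positivity : 0 ≤ t * σ)
  rw [hexp] at hupper hlower
  have hsub : {ω | t * σ < |∑ q, c q * (χ q ω - ρ q)|}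
      ⊆ {ω | t * σ ≤ ∑ q, c q * (χ q ω - ρ q)} ∪ {ω | t * σ ≤ ∑ q, -c q * (χ q ω - ρ q)} := by
    intro ω hω
    simp only [neg_mul, Finset.sum_neg_distrib, Set.mem_union, Set.mem_ofPred_eq] at hω ⊢
    rcases lt_abs.mp hω with h | h
    · exact Or.inl h.le
    · exact Or.inr h.le
  calc μ {ω | t * σ < |∑ q, c q * (χ q ω - ρ q)|}
      ≤ μ {ω | t * σ ≤ ∑ q, c q * (χ q ω - ρ q)}
          + μ {ω | t * σ ≤ ∑ q, -c q * (χ q ω - ρ q)} :=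
        (measure_mono hsub).trans (measure_union_le _ _)
    _ ≤ ENNReal.ofReal (2 * exp (-(t ^ 2 / 2) / (1 + t * b / (3 * σ)))) := by
        rw [two_mul, ENNReal.ofReal_add (exp_pos _).le (exp_pos _).le]
        exact add_le_add hupper hlower

end Bernstein

section LinearAlgebra

variable {ι : Type*} [Fintype ι]

lemma trace_mul_transpose_eq_sum {R : Type*} [CommSemiring R] (X Y : Matrix ι ι R) :
    (X * Yᵀ).trace = ∑ i, ∑ j, X i j * Y i j := by
  simp [trace, mul_apply]

lemma trace_sub_conj_mul_transpose_sub_conj {R : Type*} [CommRing R] {E X Y : Matrix ι ι R}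
    (hE : E.IsSymm) (hEE : IsIdempotentElem E) :
    ((X - E * X * E) * (Y - E * Y * E)ᵀ).trace = ((X - E * X * E) * Yᵀ).trace := by
  have hW : E * (X - E * X * E) * E = 0 := by
    simp only [Matrix.mul_sub, Matrix.sub_mul, ← Matrix.mul_assoc, hEE.eq]
    rw [Matrix.mul_assoc _ E E, hEE.eq, sub_self]
  have hcross : ((X - E * X * E) * (E * Y * E)ᵀ).trace = 0 := by
    rw [transpose_mul, transpose_mul, hE.eq, ← Matrix.mul_assoc, ← Matrix.mul_assoc,
      trace_mul_comm, ← Matrix.mul_assoc, ← Matrix.mul_assoc, hW, Matrix.zero_mul, trace_zero]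
  rw [transpose_sub, Matrix.mul_sub, trace_sub, hcross, sub_zero]

lemma sum_sum_eq_sum_le_of_symm {R : Type*} [LinearOrder ι] [CommRing R]
    (f : ι → ι → R) (hf : ∀ i j, f i j = f j i) :
    ∑ i, ∑ j, f i j
      = ∑ p : {p : ι × ι // p.1 ≤ p.2},
          (if p.1.1 = p.1.2 then 1 else 2) * f p.1.1 p.1.2 := by
  classical
  have hswap : ∑ p ∈ univ.filter (fun p : ι × ι => ¬ p.1 ≤ p.2), f p.1 p.2
      = ∑ p ∈ univ.filter (fun p : ι × ι => p.1 < p.2), f p.1 p.2 :=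
    sum_equiv (Equiv.prodComm ι ι) (by simp) (fun p _ => hf _ _)
  have hdiag : ∑ p ∈ univ.filter (fun p : ι × ι => p.1 ≤ p.2),
        (if p.1 = p.2 then 1 else 2) * f p.1 p.2
      = ∑ p ∈ univ.filter (fun p : ι × ι => p.1 ≤ p.2), f p.1 p.2
        + ∑ p ∈ univ.filter (fun p : ι × ι => p.1 < p.2), f p.1 p.2 := by
    rw [sum_filter, sum_filter, sum_filter, ← sum_add_distrib]
    refine sum_congr rfl fun p _ => ?_
    rcases lt_trichotomy p.1 p.2 with h | h | h
    · simp [h.le, h, h.ne]; ring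
    · simp [h]
    · simp [not_le.mpr h, not_lt.mpr h.le]
  rw [sum_subtype (univ.filter fun p : ι × ι => p.1 ≤ p.2) (by simp)
      (fun p : ι × ι => (if p.1 = p.2 then 1 else 2) * f p.1 p.2) |>.symm, hdiag, ← hswap,
    sum_filter_add_sum_filter_not, ← Fintype.sum_prod_type']

variable [DecidableEq ι] {S X : Matrix ι ι ℝ}

lemma mul_apply_mem_Icc_of_mem_rowStochastic (hS : S ∈ rowStochastic ℝ ι) {lo hi : ℝ}
    (hX : ∀ i j, X i j ∈ Set.Icc lo hi) (i j : ι) : (S * X) i j ∈ Set.Icc lo hi := by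
  have hsum := sum_row_of_mem_rowStochastic hS i
  rw [mul_apply]
  constructor
  · calc lo = ∑ k, S i k * lo := by rw [← sum_mul, hsum, one_mul]
      _ ≤ ∑ k, S i k * X k j :=
        sum_le_sum fun k _ => mul_le_mul_of_nonneg_left (hX k j).1 (nonneg_of_mem_rowStochastic hS)
  · calc ∑ k, S i k * X k j ≤ ∑ k, S i k * hi :=
        sum_le_sum fun k _ => mul_le_mul_of_nonneg_left (hX k j).2 (nonneg_of_mem_rowStochastic hS)
      _ = hi := by rw [← sum_mul, hsum, one_mul]

lemma mul_apply_mem_Icc_of_mem_rowStochastic_of_isSymm (hS : S ∈ rowStochastic ℝ ι)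
    (hSs : S.IsSymm) {lo hi : ℝ} (hX : ∀ i j, X i j ∈ Set.Icc lo hi) (i j : ι) :
    (X * S) i j ∈ Set.Icc lo hi := by
  rw [← transpose_apply (X * S), transpose_mul, hSs.eq]
  exact mul_apply_mem_Icc_of_mem_rowStochastic hS (fun i j => hX j i) j i

lemma sub_one_sub_conj_eq (S X : Matrix ι ι ℝ) :
    X - (1 - S) * X * (1 - S) = S * X + X * S - S * X * S := by
  noncomm_ring

lemma abs_sub_one_sub_conj_apply_le (hS : S ∈ rowStochastic ℝ ι) (hSs : S.IsSymm) {a : ℝ}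
    (hX : ∀ i j, X i j ∈ Set.Icc 0 a) (i j : ι) :
    |(X - (1 - S) * X * (1 - S)) i j| ≤ 2 * a := by
  have h₁ := mul_apply_mem_Icc_of_mem_rowStochastic hS hX i j
  have h₂ := mul_apply_mem_Icc_of_mem_rowStochastic_of_isSymm hS hSs hX i j
  have h₃ := mul_apply_mem_Icc_of_mem_rowStochastic_of_isSymm hS hSs
    (mul_apply_mem_Icc_of_mem_rowStochastic hS hX) i j
  rw [sub_one_sub_conj_eq, Matrix.sub_apply, Matrix.add_apply, abs_le]
  constructor <;> linarith [h₁.1, h₁.2, h₂.1, h₂.2, h₃.1, h₃.2]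

lemma sub_one_sub_conj_eq_self (hS : S ∈ rowStochastic ℝ ι) (hX : ∀ i i' j, X i j = X i' j) :
    X - (1 - S) * X * (1 - S) = X := by
  have hSX : S * X = X := by
    ext i j
    rw [mul_apply, sum_congr rfl fun k _ => by rw [hX k i j], ← sum_mul,
      sum_row_of_mem_rowStochastic hS, one_mul]
  rw [Matrix.sub_mul, Matrix.one_mul, hSX, sub_self, Matrix.zero_mul, sub_zero]

end LinearAlgebra

lemma eq_of_card_lt_two_mul_card_fiber {ι κ : Type*} [Fintype ι] [DecidableEq κ] {g : ι → κ}
    {c : ℕ} (hc : ∀ k, c ≤ (univ.filter fun x => g x = k).card) (h : Fintype.card ι < 2 * c)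
    (i i' : ι) : g i = g i' := by
  by_contra hne
  have hsub : univ.filter (fun x => g x = g i') ⊆ univ.filter fun x => ¬ g x = g i := by
    intro x
    simp only [mem_filter, mem_univ, true_and]
    exact fun hx hx' => hne (hx'.symm.trans hx)
  have := card_filter_add_card_filter_not (s := univ) fun x => g x = g i
  have := card_le_card hsub
  have := hc (g i); have := hc (g i')
  rw [card_univ] at *
  omega

lemma sInf_card_fiber_pos {M ι : Type*} [Fintype ι] {κ : M → Type*} [∀ m, DecidableEq (κ m)]
    {g : ∀ m, ι → κ m} (hg : ∀ m, Function.Surjective (g m)) (m : M) (k : κ m) :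
    0 < sInf {c : ℕ | ∃ m k, c = (univ.filter fun i => g m i = k).card} := by
  refine Nat.pos_of_ne_zero fun h => ?_
  rcases Nat.sInf_eq_zero.mp h with ⟨m', k', h0⟩ | h
  · obtain ⟨i, hi⟩ := hg m' k'
    exact (card_pos.mpr ⟨i, by simpa using hi⟩).ne h0
  · exact (Set.eq_empty_iff_forall_notMem.mp h) _ ⟨m, k, rfl⟩

section Membership

variable {ι κ : Type*} [DecidableEq κ] (g : ι → κ)

def membershipMatrix : Matrix ι κ ℝ := of fun i k => if g i = k then 1 else 0

noncomputable def normalizedMembershipMatrix [Fintype ι] : Matrix ι κ ℝ :=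
  of fun i k => (if g i = k then 1 else 0) / Real.sqrt (univ.filter fun i' => g i' = k).card

lemma membershipMatrix_mul_mul_transpose [Fintype κ] (B : Matrix κ κ ℝ) :
    membershipMatrix g * B * (membershipMatrix g)ᵀ = B.submatrix g g := by
  ext i j
  simp [membershipMatrix, mul_apply, ite_mul]

lemma normalizedMembershipMatrix_mul_transpose_apply [Fintype ι] [Fintype κ] (i i' : ι) :
    (normalizedMembershipMatrix g * (normalizedMembershipMatrix g)ᵀ) i i'
      = if g i = g i' then ((univ.filter fun x => g x = g i).card : ℝ)⁻¹ else 0 := by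
  simp only [normalizedMembershipMatrix, mul_apply, transpose_apply, of_apply]
  rw [sum_eq_single (g i) (fun k _ hk => by simp [Ne.symm hk]) (by simp)]
  have : (0 : ℝ) ≤ (univ.filter fun x => g x = g i).card := by positivity
  by_cases h : g i = g i'
  · rw [if_pos rfl, if_pos h.symm, if_pos h, div_mul_div_comm, one_mul, Real.mul_self_sqrt this,
      one_div]
  · rw [if_neg (Ne.symm h), if_neg h, zero_div, mul_zero]

lemma normalizedMembershipMatrix_mul_transpose_mem_rowStochastic [Fintype ι] [Fintype κ]
    [DecidableEq ι] :
    normalizedMembershipMatrix g * (normalizedMembershipMatrix g)ᵀ ∈ rowStochastic ℝ ι := by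
  refine mem_rowStochastic_iff_sum.mpr ⟨fun i j => ?_, fun i => ?_⟩
  · rw [normalizedMembershipMatrix_mul_transpose_apply]
    split_ifs <;> positivity
  · have hpos : 0 < (univ.filter fun x => g x = g i).card := card_pos.mpr ⟨i, by simp⟩
    simp_rw [normalizedMembershipMatrix_mul_transpose_apply, ← sum_filter, sum_const,
      nsmul_eq_mul, eq_comm (a := g i)]
    exact mul_inv_cancel₀ (by positivity)

lemma normalizedMembershipMatrix_transpose_mul_self [Fintype ι] (hg : Function.Surjective g) :
    (normalizedMembershipMatrix g)ᵀ * normalizedMembershipMatrix g = 1 := by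
  ext k k'
  simp only [normalizedMembershipMatrix, mul_apply, transpose_apply, of_apply]
  by_cases h : k = k'
  · subst h
    obtain ⟨i, hi⟩ := hg k
    have hpos : 0 < (univ.filter fun x => g x = k).card := card_pos.mpr ⟨i, by simpa using hi⟩
    have : (0 : ℝ) ≤ (univ.filter fun x => g x = k).card := by positivity
    have hterm : ∀ j, (if g j = k then 1 else 0) / √((univ.filter fun x => g x = k).card : ℝ)
        * ((if g j = k then 1 else 0) / √((univ.filter fun x => g x = k).card : ℝ))
        = if g j = k then ((univ.filter fun x => g x = k).card : ℝ)⁻¹ else 0 := fun j => by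
      split_ifs
      · rw [div_mul_div_comm, one_mul, Real.mul_self_sqrt this, one_div]
      · simp
    simp_rw [hterm, ← sum_filter, sum_const, nsmul_eq_mul, one_apply_eq]
    exact mul_inv_cancel₀ (by positivity)
  · rw [one_apply_ne h]
    refine sum_eq_zero fun j _ => ?_
    by_cases hj : g j = k
    · simp [hj, h]
    · simp [hj]

lemma normalizedMembershipMatrix_mul_transpose_isIdempotentElem [Fintype ι] [Fintype κ]
    (hg : Function.Surjective g) :
    IsIdempotentElem (normalizedMembershipMatrix g * (normalizedMembershipMatrix g)ᵀ) := by
  rw [IsIdempotentElem, Matrix.mul_assoc, ← Matrix.mul_assoc _ (normalizedMembershipMatrix g),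
    normalizedMembershipMatrix_transpose_mul_self g hg, Matrix.one_mul]

end Membership

lemma smul_submatrix_apply_mem_Icc {ι κ : Type*} {g : ι → κ} {B : Matrix κ κ ℝ}
    {c p : ℝ} (hc : 0 ≤ c) (hB : ∀ k k', B k k' ∈ Set.Icc 0 p) (i j : ι) :
    (c • B.submatrix g g) i j ∈ Set.Icc 0 (c * p) :=
  ⟨mul_nonneg hc (hB _ _).1, mul_le_mul_of_nonneg_left (hB _ _).2 hc⟩

lemma two_mul_abs_sub_one_sub_conj_smul_submatrix_apply_le {ι κ : Type*} [Fintype ι]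
    [DecidableEq ι] [DecidableEq κ] {S : Matrix ι ι ℝ} (hS : S ∈ rowStochastic ℝ ι)
    (hSs : S.IsSymm) {g : ι → κ} {B : Matrix κ κ ℝ} {c p : ℝ} (hc : 0 ≤ c)
    (hp : 0 ≤ p) (hB : ∀ k k', B k k' ∈ Set.Icc 0 p) {gmin : ℕ} (hgmin : 0 < gmin)
    (hgι : gmin ≤ Fintype.card ι) (hfib : ∀ k, gmin ≤ (univ.filter fun i => g i = k).card)
    (i j : ι) :
    2 * |(c • B.submatrix g g - (1 - S) * (c • B.submatrix g g) * (1 - S)) i j|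
      ≤ 3 * (c * p) * √(Fintype.card ι / gmin) := by
  have hX := smul_submatrix_apply_mem_Icc (g := g) hc hB
  have hgmin' : (0 : ℝ) < gmin := by exact_mod_cast hgmin
  by_cases h : 2 * gmin ≤ Fintype.card ι
  · have hr : 4 / 3 ≤ √(Fintype.card ι / gmin) := by
      rw [le_sqrt' (by norm_num), le_div_iff₀ hgmin']
      have : (2 * gmin : ℝ) ≤ Fintype.card ι := by exact_mod_cast h
      linarith
    nlinarith [abs_sub_one_sub_conj_apply_le hS hSs hX i j, mul_nonneg hc hp]
  · have hr : 1 ≤ √(Fintype.card ι / gmin) := by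
      rw [one_le_sqrt, le_div_iff₀ hgmin', one_mul]
      exact_mod_cast hgι
    have hconst : ∀ i i' j, (c • B.submatrix g g) i j = (c • B.submatrix g g) i' j := by
      intro i i' j
      simp [eq_of_card_lt_two_mul_card_fiber hfib (not_le.mp h) i i']
    rw [sub_one_sub_conj_eq_self hS hconst, abs_of_nonneg (hX i j).1]
    nlinarith [(hX i j).2, mul_nonneg hc hp]

section RandomMatrix

variable {Ω : Type*} [MeasurableSpace Ω] {μ : Measure Ω}

lemma measure_abs_trace_gt_le_of_isBernoulli [IsProbabilityMeasure μ] {α : Type*}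
    [Fintype α] [LinearOrder α] {Y : Ω → Matrix α α ℝ} {P W : Matrix α α ℝ}
    (hYs : ∀ ω i j, Y ω i j = Y ω j i) (hPs : P.IsSymm) (hWs : W.IsSymm)
    (hY : ∀ i j, IsBernoulli μ (fun ω => Y ω i j) (P i j))
    (hind : iIndepFun (fun (p : {p : α × α // p.1 ≤ p.2}) ω => Y ω p.1.1 p.1.2) μ)
    {pmax b σ t : ℝ} (hP : ∀ i j, P i j ≤ pmax) (hWb : ∀ i j, 2 * |W i j| ≤ b) (hb : 0 ≤ b)
    (hWσ : 2 * pmax * ∑ i, ∑ j, W i j ^ 2 ≤ σ ^ 2) (hσ : 0 < σ) (ht : 0 ≤ t) :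
    μ {ω | t * σ < |(W * (Y ω - P)ᵀ).trace|}
      ≤ ENNReal.ofReal (2 * exp (-(t ^ 2 / 2) / (1 + t * b / (3 * σ)))) := by
  set w : {p : α × α // p.1 ≤ p.2} → ℝ := fun p => if p.1.1 = p.1.2 then 1 else 2
  have hw : ∀ p, w p ^ 2 ≤ 2 * w p ∧ |w p| ≤ 2 := fun p => by
    by_cases h : p.1.1 = p.1.2 <;> norm_num [w, h]
  have hrepr : ∀ ω, (W * (Y ω - P)ᵀ).trace
      = ∑ p, w p * W p.1.1 p.1.2 * (Y ω p.1.1 p.1.2 - P p.1.1 p.1.2) := fun ω => by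
    rw [trace_mul_transpose_eq_sum, sum_sum_eq_sum_le_of_symm _ fun i j => by
      rw [hWs.apply, Matrix.sub_apply, Matrix.sub_apply, hYs, hPs.apply]]
    simp only [Matrix.sub_apply, mul_assoc, w]
  simp_rw [hrepr]
  refine measure_abs_sum_gt_le_of_isBernoulli (fun p => hY _ _) hind (fun p => ?_) hb ?_ hσ ht
  · rw [abs_mul]
    exact (mul_le_mul_of_nonneg_right (hw p).2 (abs_nonneg _)).trans (hWb _ _)
  · calc ∑ p, (w p * W p.1.1 p.1.2) ^ 2 * P p.1.1 p.1.2
        ≤ ∑ p, w p * (2 * pmax * W p.1.1 p.1.2 ^ 2) := sum_le_sum fun p _ => by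
          have hP0 := (hY p.1.1 p.1.2).nonneg
          calc (w p * W p.1.1 p.1.2) ^ 2 * P p.1.1 p.1.2
              ≤ 2 * w p * W p.1.1 p.1.2 ^ 2 * P p.1.1 p.1.2 := by
                rw [mul_pow]; gcongr; exact (hw p).1
            _ ≤ 2 * w p * W p.1.1 p.1.2 ^ 2 * pmax := by
                gcongr
                exact hP _ _
            _ = w p * (2 * pmax * W p.1.1 p.1.2 ^ 2) := by ring
      _ = 2 * pmax * ∑ i, ∑ j, W i j ^ 2 := by
          rw [sum_sum_eq_sum_le_of_symm (fun i j => W i j ^ 2) fun i j => by rw [hWs.apply],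
            mul_sum]
          exact sum_congr rfl fun p _ => by ring
      _ ≤ σ ^ 2 := hWσ

lemma measure_frobNorm_gt_le_sum {a b : ℕ} (X : Ω → Matrix (Fin a) (Fin b) ℝ)
    (s : Fin a → Fin b → ℝ) {τ : ℝ} (hτ : √(∑ i, ∑ j, s i j ^ 2) ≤ τ) :
    μ {ω | τ < frobNorm (X ω)} ≤ ∑ i, ∑ j, μ {ω | s i j < |X ω i j|} := by
  have hsub : {ω | τ < frobNorm (X ω)} ⊆ ⋃ i, ⋃ j, {ω | s i j < |X ω i j|} := by
    intro ω hω
    by_contra h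
    simp only [Set.mem_iUnion, Set.mem_ofPred_eq, not_exists, not_lt] at h
    refine (lt_irrefl τ) (hω.trans_le (le_trans ?_ hτ))
    exact sqrt_le_sqrt (sum_le_sum fun i _ => sum_le_sum fun j _ =>
      sq_le_sq' (neg_le_of_abs_le (h i j)) (le_of_abs_le (h i j)))
  calc μ {ω | τ < frobNorm (X ω)}
      ≤ μ (⋃ i, ⋃ j, {ω | s i j < |X ω i j|}) := measure_mono hsub
    _ ≤ ∑ i, μ (⋃ j, {ω | s i j < |X ω i j|}) := measure_iUnion_fintype_le _ _
    _ ≤ ∑ i, ∑ j, μ {ω | s i j < |X ω i j|} :=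
        sum_le_sum fun i _ => measure_iUnion_fintype_le _ _

lemma prod23_piT_piT_apply {J J' n : ℕ} {E : Matrix (Fin n) (Fin n) ℝ} (hE : E.IsSymm)
    (hEE : IsIdempotentElem E) (X : Fin J → Matrix (Fin n) (Fin n) ℝ)
    (Y : Fin J' → Matrix (Fin n) (Fin n) ℝ) (i : Fin J) (j : Fin J') :
    prod23 (piT E X) (piT E Y) i j = (piT E X i * (Y j)ᵀ).trace :=
  trace_sub_conj_mul_transpose_sub_conj hE hEE

lemma measure_frobNorm_prod23_piT_gt_le [IsProbabilityMeasure μ] {n L M : ℕ} (hn : 0 < n)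
    {S : Matrix (Fin n) (Fin n) ℝ} (hS : S ∈ rowStochastic ℝ (Fin n)) (hSs : S.IsSymm)
    (hSS : IsIdempotentElem S) {Q : Fin M → Matrix (Fin n) (Fin n) ℝ} {a : Fin M → ℝ}
    (ha : ∀ m, 0 < a m) (hQ : ∀ m i j, Q m i j ∈ Set.Icc 0 (a m)) (hQs : ∀ m, (Q m).IsSymm)
    {A : Ω → Fin L → Matrix (Fin n) (Fin n) ℝ} {P : Fin L → Matrix (Fin n) (Fin n) ℝ}
    (hAs : ∀ ω l i j, A ω l i j = A ω l j i) (hPs : ∀ l, (P l).IsSymm)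
    (hA : ∀ l i j, IsBernoulli μ (fun ω => A ω l i j) (P l i j))
    (hind : ∀ l, iIndepFun (fun (p : {p : Fin n × Fin n // p.1 ≤ p.2}) ω =>
      A ω l p.1.1 p.1.2) μ)
    {pmax r G t τ : ℝ} (hpmax : 0 < pmax) (hP : ∀ l i j, P l i j ≤ pmax) (hr : 0 ≤ r)
    (hG : 0 < G) (hrG : r * G = n * √pmax)
    (hW : ∀ m i j, 2 * |piT (1 - S) Q m i j| ≤ 3 * a m * r) (ht : 0 ≤ t) (hτ0 : 0 ≤ τ)
    (hτ : 9 * t ^ 2 * n ^ 2 * pmax * L * ∑ m, a m ^ 2 ≤ τ ^ 2) :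
    μ {ω | τ < frobNorm (prod23 (piT (1 - S) Q) (piT (1 - S) fun l => A ω l - P l))}
      ≤ ENNReal.ofReal (2 * M * L * exp (-(t ^ 2 / 2) / (1 + t / (3 * G)))) := by
  have hE : (1 - S).IsSymm := by rw [IsSymm, transpose_sub, transpose_one, hSs.eq]
  have hWs : ∀ m, (piT (1 - S) Q m).IsSymm := fun m => by
    rw [piT, IsSymm, transpose_sub, transpose_mul, transpose_mul, hE.eq, (hQs m).eq, mul_assoc]
  have hn' : (0 : ℝ) < n := by exact_mod_cast hn
  have hσ : ∀ m, 0 < 3 * n * a m * √pmax := fun m => by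
    have := ha m; have := sqrt_pos.mpr hpmax; positivity
  have hvar : ∀ m,
      2 * pmax * ∑ i, ∑ j, piT (1 - S) Q m i j ^ 2 ≤ (3 * n * a m * √pmax) ^ 2 := by
    intro m
    have hsq : ∀ i j, piT (1 - S) Q m i j ^ 2 ≤ (2 * a m) ^ 2 := fun i j =>
      sq_le_sq' (neg_le_of_abs_le (abs_sub_one_sub_conj_apply_le hS hSs (hQ m) i j))
        (le_of_abs_le (abs_sub_one_sub_conj_apply_le hS hSs (hQ m) i j))
    calc 2 * pmax * ∑ i, ∑ j, piT (1 - S) Q m i j ^ 2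
        ≤ 2 * pmax * ∑ _i : Fin n, ∑ _j : Fin n, (2 * a m) ^ 2 := by
          gcongr 2 * pmax * ?_
          exact sum_le_sum fun i _ => sum_le_sum fun j _ => hsq i j
      _ ≤ (3 * n * a m * √pmax) ^ 2 := by
          simp only [sum_const, card_univ, Fintype.card_fin, nsmul_eq_mul]
          rw [mul_pow, mul_pow, mul_pow, sq_sqrt hpmax.le]
          nlinarith [sq_nonneg ((n : ℝ) * a m)]
  have hexp : ∀ m, t / (3 * G) = t * (3 * a m * r) / (3 * (3 * n * a m * √pmax)) := fun m => by
    have := ha m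
    have := hσ m
    rw [div_eq_div_iff (by positivity) (by positivity)]
    linear_combination (-9 * t * a m) * hrG
  refine (measure_frobNorm_gt_le_sum _ (fun m _ => t * (3 * n * a m * √pmax)) ?_).trans ?_
  · refine sqrt_le_iff.mpr ⟨hτ0, le_of_eq_of_le ?_ hτ⟩
    simp only [sum_const, card_univ, Fintype.card_fin, nsmul_eq_mul, mul_sum]
    refine sum_congr rfl fun m _ => ?_
    rw [mul_pow, mul_pow, mul_pow, mul_pow, sq_sqrt hpmax.le]
    ring
  calc ∑ m, ∑ l, μ {ω | t * (3 * n * a m * √pmax) <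
        |prod23 (piT (1 - S) Q) (piT (1 - S) fun l => A ω l - P l) m l|}
      ≤ ∑ _m : Fin M, ∑ _l : Fin L,
          ENNReal.ofReal (2 * exp (-(t ^ 2 / 2) / (1 + t / (3 * G)))) := by
        refine sum_le_sum fun m _ => sum_le_sum fun l _ => ?_
        simp_rw [prod23_piT_piT_apply hE hSS.one_sub, hexp m]
        exact measure_abs_trace_gt_le_of_isBernoulli (hAs · l) (hPs l) (hWs m) (hA l) (hind l)
          (hP l) (hW m) (by have := ha m; positivity) (hvar m) (hσ m) ht
    _ = ENNReal.ofReal (2 * M * L * exp (-(t ^ 2 / 2) / (1 + t / (3 * G)))) := by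
        simp only [sum_const, card_univ, Fintype.card_fin, nsmul_eq_mul]
        rw [← ENNReal.ofReal_natCast, ← ENNReal.ofReal_natCast,
          ← ENNReal.ofReal_mul (by positivity), ← ENNReal.ofReal_mul (by positivity)]
        ring_nf

end RandomMatrix

theorem stmt18_general
    {n L M : ℕ} (hn : 0 < n)
    (K : Fin M → ℕ) (hK : ∀ m, 0 < K m)
    (pmax : ℝ) (hp0 : 0 < pmax)
    -- the partition of the layers and of the nodes
    (z : Fin L → Fin M) (hz : Function.Surjective z)
    (g : ∀ m : Fin M, Fin n → Fin (K m)) (hg : ∀ m, Function.Surjective (g m))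
    -- the connectivity matrices
    (B : ∀ m : Fin M, Matrix (Fin (K m)) (Fin (K m)) ℝ)
    (hBsymm : ∀ m, (B m)ᵀ = B m)
    (hBrange : ∀ m k k', B m k k' ∈ Set.Icc (0 : ℝ) pmax)
    -- membership matrices and the model quantities
    (Θ : ∀ m : Fin M, Matrix (Fin n) (Fin (K m)) ℝ)
    (hΘ : ∀ m i k, Θ m i k = if g m i = k then 1 else 0)
    (P : Fin L → Matrix (Fin n) (Fin n) ℝ)
    (hP : ∀ l, P l = Θ (z l) * B (z l) * (Θ (z l))ᵀ)
    (Q : Fin M → Matrix (Fin n) (Fin n) ℝ)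
    (hQ : ∀ m, Q m =
      Real.sqrt ((Finset.univ.filter fun l => z l = m).card) • (Θ m * B m * (Θ m)ᵀ))
    (U : ∀ m : Fin M, Matrix (Fin n) (Fin (K m)) ℝ)
    (hU : ∀ m i k, U m i k =
      (if g m i = k then 1 else 0) /
        Real.sqrt ((Finset.univ.filter fun i' => g m i' = k).card))
    (gmin : ℕ)
    (hgmin : gmin = sInf {c : ℕ | ∃ m k, c = (Finset.univ.filter fun i => g m i = k).card})
    (Kdot : ℕ) (hKdot : Kdot = ∑ m, K m)
    -- the probability space and the random adjacency tensor
    {Ω : Type} [MeasurableSpace Ω] (μ : Measure Ω) [IsProbabilityMeasure μ]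
    (A : Ω → Fin L → Matrix (Fin n) (Fin n) ℝ)
    (hmeas : ∀ l i j, Measurable fun ω => A ω l i j)
    (hsymm : ∀ ω l i j, A ω l i j = A ω l j i)
    (h01 : ∀ ω l i j, A ω l i j = 0 ∨ A ω l i j = 1)
    (hBer : ∀ l i j, μ {ω | A ω l i j = 1} = ENNReal.ofReal (P l i j))
    (hindep : ProbabilityTheory.iIndepFun
      (fun (q : {q : Fin L × Fin n × Fin n // q.2.1 ≤ q.2.2}) ω =>
        A ω q.1.1 q.1.2.1 q.1.2.2) μ) :
    ∀ (m : Fin M) (t : ℝ), 0 < t →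
      μ {ω | 3 * t * n * L * Real.sqrt (pmax ^ 3) <
          frobNorm (prod23 (piT (1 - U m * (U m)ᵀ) Q)
            (piT (1 - U m * (U m)ᵀ) (fun l => A ω l - P l)))} ≤
        ENNReal.ofReal (2 * Kdot * L *
          Real.exp (-(t ^ 2 / 2) / (1 + t / (3 * Real.sqrt (pmax * n * gmin))))) := by
  intro m t ht
  set Lc : Fin M → ℕ := fun m' => (Finset.univ.filter fun l => z l = m').card
  have hΘ' : ∀ m', Θ m' = membershipMatrix (g m') := fun m' => Matrix.ext (hΘ m')
  have hPe : ∀ l, P l = (B (z l)).submatrix (g (z l)) (g (z l)) := fun l => by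
    rw [hP, hΘ', membershipMatrix_mul_mul_transpose]
  have hQe : ∀ m', Q m' = √(Lc m') • (B m').submatrix (g m') (g m') := fun m' => by
    rw [hQ, hΘ', membershipMatrix_mul_mul_transpose]
  have hS : U m = normalizedMembershipMatrix (g m) := Matrix.ext (hU m)
  have hgmin_pos : 0 < gmin := hgmin ▸ sInf_card_fiber_pos hg m ⟨0, hK m⟩
  have hgmin_le : ∀ m' k, gmin ≤ (Finset.univ.filter fun i => g m' i = k).card :=
    fun m' k => hgmin ▸ Nat.sInf_le ⟨m', k, rfl⟩
  have hgmin_n : gmin ≤ n := by simpa using (hgmin_le m ⟨0, hK m⟩).trans (card_le_univ _)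
  have hLc : ∀ m', 0 < √(Lc m') * pmax := fun m' => by
    have : 0 < Lc m' := card_pos.mpr ⟨(hz m').choose, by simpa using (hz m').choose_spec⟩
    positivity
  have hLsum : ∑ m', (Lc m' : ℝ) = L := by
    have := card_eq_sum_card_fiberwise (s := univ) (t := univ) (f := z) fun _ _ => mem_univ _
    simp only [card_univ, Fintype.card_fin] at this
    exact_mod_cast this.symm
  have hrG : √(n / gmin) * √(pmax * n * gmin) = n * √pmax := by
    have : (0 : ℝ) < gmin := by exact_mod_cast hgmin_pos
    rw [← sqrt_mul (by positivity), show (n : ℝ) / gmin * (pmax * n * gmin) = n ^ 2 * pmax by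
      field_simp, sqrt_mul (sq_nonneg _), sqrt_sq (Nat.cast_nonneg _)]
  have hMK : (M : ℝ) ≤ Kdot := by
    simpa [hKdot] using card_nsmul_le_sum univ (fun m' => (K m' : ℝ)) 1 fun m' _ => by
      exact_mod_cast hK m'
  have hA : ∀ l i j, IsBernoulli μ (fun ω => A ω l i j) (P l i j) := fun l i j =>
    ⟨hmeas l i j, fun ω => h01 ω l i j, by rw [hPe]; exact (hBrange _ _ _).1, hBer l i j⟩
  have hind : ∀ l, iIndepFun (fun (p : {p : Fin n × Fin n // p.1 ≤ p.2}) ω =>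
      A ω l p.1.1 p.1.2) μ := fun l =>
    hindep.precomp (g := fun p : {p : Fin n × Fin n // p.1 ≤ p.2} => ⟨(l, p.1), p.2⟩)
      fun p q h => Subtype.ext (congrArg (·.1.2) h)
  have hW : ∀ m' i j, 2 * |piT (1 - U m * (U m)ᵀ) Q m' i j|
      ≤ 3 * (√(Lc m') * pmax) * √(n / gmin) := fun m' i j => by
    simpa only [piT, hS, hQe, Fintype.card_fin] using
      two_mul_abs_sub_one_sub_conj_smul_submatrix_apply_le
        (normalizedMembershipMatrix_mul_transpose_mem_rowStochastic (g m)) (transpose_mul _ _)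
        (sqrt_nonneg _) hp0.le (hBrange m') hgmin_pos (by simpa using hgmin_n) (hgmin_le m') i j
  have hτ : 9 * t ^ 2 * n ^ 2 * pmax * L * ∑ m', (√(Lc m') * pmax) ^ 2
      ≤ (3 * t * n * L * √(pmax ^ 3)) ^ 2 := by
    simp only [mul_pow, sq_sqrt (Nat.cast_nonneg _), ← sum_mul, hLsum,
      sq_sqrt (pow_nonneg hp0.le 3)]
    exact le_of_eq (by ring)
  refine (measure_frobNorm_prod23_piT_gt_le hn (S := U m * (U m)ᵀ)
    (hS ▸ normalizedMembershipMatrix_mul_transpose_mem_rowStochastic (g m)) (transpose_mul _ _)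
    (hS ▸ normalizedMembershipMatrix_mul_transpose_isIdempotentElem (g m) (hg m)) hLc
    (fun m' => hQe m' ▸ smul_submatrix_apply_mem_Icc (sqrt_nonneg _) (hBrange m'))
    (fun m' => hQe m' ▸ (IsSymm.submatrix (hBsymm m') _).smul _) hsymm
    (fun l => hPe l ▸ IsSymm.submatrix (hBsymm _) _) hA hind hp0
    (fun l i j => by rw [hPe]; exact (hBrange _ _ _).2) (sqrt_nonneg _) (by positivity) hrG hW
    ht.le (by positivity) hτ).trans (ENNReal.ofReal_le_ofReal (by gcongr))

/-- Concentration of `‖Π_{T,K_m}(Q_*) ×_{2,3} Π_{T,K_m}(Δ)‖_F`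
in the Mixture Multilayer Stochastic Block Model. -/
theorem stmt18
    {n L M : ℕ} (hn : 0 < n) (hL : 0 < L) (hM : 0 < M)
    (K : Fin M → ℕ) (hK : ∀ m, 0 < K m)
    (pmax : ℝ) (hp0 : 0 < pmax) (hp1 : pmax ≤ 1)
    -- the partition of the layers and of the nodes
    (z : Fin L → Fin M) (hz : Function.Surjective z)
    (g : ∀ m : Fin M, Fin n → Fin (K m)) (hg : ∀ m, Function.Surjective (g m))
    -- the connectivity matrices
    (B : ∀ m : Fin M, Matrix (Fin (K m)) (Fin (K m)) ℝ)
    (hBsymm : ∀ m, (B m)ᵀ = B m)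
    (hBrange : ∀ m k k', B m k k' ∈ Set.Icc (0 : ℝ) pmax)
    -- membership matrices and the model quantities
    (Θ : ∀ m : Fin M, Matrix (Fin n) (Fin (K m)) ℝ)
    (hΘ : ∀ m i k, Θ m i k = if g m i = k then 1 else 0)
    (P : Fin L → Matrix (Fin n) (Fin n) ℝ)
    (hP : ∀ l, P l = Θ (z l) * B (z l) * (Θ (z l))ᵀ)
    (Q : Fin M → Matrix (Fin n) (Fin n) ℝ)
    (hQ : ∀ m, Q m =
      Real.sqrt ((Finset.univ.filter fun l => z l = m).card) • (Θ m * B m * (Θ m)ᵀ))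
    (U : ∀ m : Fin M, Matrix (Fin n) (Fin (K m)) ℝ)
    (hU : ∀ m i k, U m i k =
      (if g m i = k then 1 else 0) /
        Real.sqrt ((Finset.univ.filter fun i' => g m i' = k).card))
    (gmin : ℕ)
    (hgmin : gmin = sInf {c : ℕ | ∃ m k, c = (Finset.univ.filter fun i => g m i = k).card})
    (Kdot : ℕ) (hKdot : Kdot = ∑ m, K m)
    -- the probability space and the random adjacency tensor
    {Ω : Type} [MeasurableSpace Ω] (μ : Measure Ω) [IsProbabilityMeasure μ]
    (A : Ω → Fin L → Matrix (Fin n) (Fin n) ℝ)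
    (hmeas : ∀ l i j, Measurable fun ω => A ω l i j)
    (hsymm : ∀ ω l i j, A ω l i j = A ω l j i)
    (h01 : ∀ ω l i j, A ω l i j = 0 ∨ A ω l i j = 1)
    (hBer : ∀ l i j, μ {ω | A ω l i j = 1} = ENNReal.ofReal (P l i j))
    (hindep : ProbabilityTheory.iIndepFun
      (fun (q : {q : Fin L × Fin n × Fin n // q.2.1 ≤ q.2.2}) ω =>
        A ω q.1.1 q.1.2.1 q.1.2.2) μ) :
    ∀ (m : Fin M) (t : ℝ), 0 < t →
      μ {ω | 3 * t * n * L * Real.sqrt (pmax ^ 3) <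
          frobNorm (prod23 (piT (1 - U m * (U m)ᵀ) Q)
            (piT (1 - U m * (U m)ᵀ) (fun l => A ω l - P l)))} ≤
        ENNReal.ofReal (2 * Kdot * L *
          Real.exp (-(t ^ 2 / 2) / (1 + t / (3 * Real.sqrt (pmax * n * gmin))))) :=
  stmt18_general hn K hK pmax hp0 z hz g hg B hBsymm hBrange Θ hΘ P hP Q hQ U hU gmin hgmin Kdot
    hKdot μ A hmeas hsymm h01 hBer hindep
end
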